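/- arXiv:2508.15049 — 7 statements merged into one kernel-verified Lean document; each statement's English description precedes it below -/
import Mathlib

section
/- Let q be an odd prime power with q ≡ 1 (mod 3), and let g denote Gauss sums with respect to a fixed generator ω of the multiplicative characters of F_q^× and a nontrivial additive character. Write q^× = q−1. Then g(q^×/3)^3 · ω(2)^{−q^×/3} = (−1)^{q^×/2} · g(q^×/2) · g(q^×/6) · g(q^×/3), and similarly g(2q^×/3)^3 · ω(2)^{−2q^×/3} = (−1)^{q^×/2} · g(q^×/2) · g(5q^×/6) · g(2q^×/3). -/
/-!
Put `χ = ω ^ ((q - 1) / 6)`, a character of order `6`. Since `ω (-1) = -1`, Euler's criterion shows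
that `χ³` is the quadratic character `η`. The Hasse–Davenport relation for `N = 2` gives
`χ(4) g(χ) g(χ⁴) = g(η) g(χ²)`, while `g(χ²) g(χ⁴) = q` and `g(η)² = η(-1) q`; eliminating `g(χ⁴)`
yields the first identity. The second one is the first one for the character `χ⁵`, which also has
order `6` and cube `η`.
-/

open Finset

section

variable {F R : Type*} [Field F] [Fintype F] [DecidableEq F] [CommRing R]

theorem sum_units_mul_eq_gaussSum (χ : MulChar F R) (ψ : AddChar F R) :
    ∑ x : Fˣ, χ x * ψ x = gaussSum χ ψ :=
  Fintype.sum_of_injective _ Units.val_injective _ (fun a ↦ χ a * ψ a)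
    (fun a ha ↦ by rw [MulChar.map_nonunit χ fun hu ↦ ha ⟨hu.unit, rfl⟩, zero_mul])
    fun _ ↦ rfl

theorem quadraticChar_ringHomComp_eq_pow (hF : ringChar F ≠ 2) {χ : MulChar F R}
    (hχ : χ (-1) = -1) :
    (quadraticChar F).ringHomComp (Int.castRingHom R) = χ ^ (Fintype.card F / 2) := by
  ext a
  rw [MulChar.pow_apply_coe, ← map_pow, ← quadraticChar_eq_pow_of_char_ne_two' hF,
    MulChar.ringHomComp_apply]
  rcases quadraticChar_dichotomy a.ne_zero with h | h <;> simp [h, hχ]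

theorem sum_comp_sq_eq_sum_quadraticChar_add_one_mul (hF : ringChar F ≠ 2) (f : F → R) :
    ∑ u : F, f (u ^ 2) = ∑ t : F, (quadraticChar F t + 1) * f t := by
  rw [← sum_fiberwise_of_maps_to (g := fun u : F ↦ u ^ 2) fun _ _ ↦ mem_univ _]
  refine sum_congr rfl fun t _ ↦ ?_
  rw [sum_congr rfl fun u hu ↦ by rw [(mem_filter.mp hu).2], sum_const, nsmul_eq_mul]
  have hcard := quadraticChar_card_sqrts hF t
  simp only [Set.toFinset_ofPred] at hcard
  exact_mod_cast congrArg (fun n : ℤ ↦ (n : R) * f t) hcard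

theorem apply_four_mul_jacobiSum_self [IsDomain R] (hF : ringChar F ≠ 2) {χ : MulChar F R}
    (hχ : χ ≠ 1) :
    χ 4 * jacobiSum χ χ = jacobiSum ((quadraticChar F).ringHomComp (Int.castRingHom R)) χ := by
  have haffine : Function.Bijective fun x : F ↦ 2 * x - 1 :=
    Finite.injective_iff_bijective.mp fun x y h ↦
      mul_left_cancel₀ (Ring.two_ne_zero hF) (sub_left_inj.mp h)
  calc χ 4 * jacobiSum χ χ = ∑ x : F, χ (1 - (2 * x - 1) ^ 2) := by
        rw [jacobiSum, mul_sum]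
        refine sum_congr rfl fun x _ ↦ ?_
        rw [← map_mul, ← map_mul]
        ring_nf
    _ = ∑ u : F, χ (1 - u ^ 2) := Fintype.sum_bijective _ haffine _ _ fun _ ↦ rfl
    _ = ∑ t : F, (quadraticChar F t + 1) * χ (1 - t) :=
        sum_comp_sq_eq_sum_quadraticChar_add_one_mul hF fun t ↦ χ (1 - t)
    _ = jacobiSum ((quadraticChar F).ringHomComp (Int.castRingHom R)) χ + ∑ t : F, χ (1 - t) := by
        simp only [add_mul, one_mul, sum_add_distrib, jacobiSum]
        rfl
    _ = _ := by
        rw [Fintype.sum_equiv (Equiv.subLeft 1) (fun t ↦ χ (1 - t)) χ fun _ ↦ rfl,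
          MulChar.sum_eq_zero_of_ne_one hχ, add_zero]

end

section

variable {F R : Type*} [Field F] [Fintype F] [DecidableEq F] [Field R]

local notation "η" => MulChar.ringHomComp (quadraticChar F) (Int.castRingHom R)

/-- The Hasse–Davenport product relation for `N = 2`. -/
theorem apply_four_mul_gaussSum_mul_gaussSum_quadraticChar_mul (hF : ringChar F ≠ 2)
    (hR : (Fintype.card F : R) ≠ 0) {χ : MulChar F R} (hχ : χ ^ 2 ≠ 1) {ψ : AddChar F R}
    (hψ : ψ.IsPrimitive) :
    χ 4 * (gaussSum χ ψ * gaussSum (η * χ) ψ) = gaussSum η ψ * gaussSum (χ ^ 2) ψ := by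
  have hχ1 : χ ≠ 1 := by rintro rfl; exact hχ (one_pow 2)
  have hηχ : η * χ ≠ 1 := fun h ↦ hχ <| by
    rw [eq_inv_of_mul_eq_one_right h, inv_pow, ((quadraticChar_isQuadratic F).comp _).sq_eq_one,
      inv_one]
  have hχχ := jacobiSum_mul_nontrivial (by rwa [← sq]) ψ
  rw [← sq] at hχχ
  refine mul_left_cancel₀ (gaussSum_ne_zero_of_nontrivial hR hχ1 hψ) ?_
  calc gaussSum χ ψ * (χ 4 * (gaussSum χ ψ * gaussSum (η * χ) ψ))
      = gaussSum (χ ^ 2) ψ * (χ 4 * jacobiSum χ χ) * gaussSum (η * χ) ψ := by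
        linear_combination (-(χ 4 * gaussSum (η * χ) ψ)) * hχχ
    _ = gaussSum (χ ^ 2) ψ * (gaussSum (η * χ) ψ * jacobiSum η χ) := by
        rw [apply_four_mul_jacobiSum_self hF hχ1]; ring
    _ = gaussSum χ ψ * (gaussSum η ψ * gaussSum (χ ^ 2) ψ) := by
        linear_combination gaussSum (χ ^ 2) ψ * jacobiSum_mul_nontrivial hηχ ψ

theorem gaussSum_pow_two_pow_three_of_orderOf_eq_six (hF : ringChar F ≠ 2)
    (hR : (Fintype.card F : R) ≠ 0) {χ : MulChar F R} (hχ : orderOf χ = 6) (hχη : χ ^ 3 = η)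
    {ψ : AddChar F R} (hψ : ψ.IsPrimitive) :
    gaussSum (χ ^ 2) ψ ^ 3 * ((χ ^ 2) 2)⁻¹ =
      (χ ^ 3) (-1) * gaussSum (χ ^ 3) ψ * gaussSum χ ψ * gaussSum (χ ^ 2) ψ := by
  have hne (n : ℕ) (hn : n ≠ 0) (h6 : n < 6) : χ ^ n ≠ 1 :=
    pow_ne_one_of_lt_orderOf hn (hχ ▸ h6)
  have hHD : (χ ^ 2) 2 * (gaussSum χ ψ * gaussSum (χ ^ 4) ψ) =
      gaussSum (χ ^ 3) ψ * gaussSum (χ ^ 2) ψ := by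
    have h4 : χ 4 = (χ ^ 2) 2 := by
      rw [MulChar.pow_apply' _ two_ne_zero, sq, ← map_mul]; norm_num
    rw [← h4, show χ ^ 4 = η * χ by rw [← hχη, ← pow_succ], hχη]
    exact apply_four_mul_gaussSum_mul_gaussSum_quadraticChar_mul hF hR (hne 2 two_ne_zero
      (by norm_num)) hψ
  have h24 : gaussSum (χ ^ 2) ψ * gaussSum (χ ^ 4) ψ = Fintype.card F := by
    have h := gaussSum_mul_gaussSum_pow_orderOf_sub_one (hne 2 two_ne_zero (by norm_num)) hψ
    have hχ2 : (χ ^ 2) (-1) = 1 := MulChar.val_neg_one_eq_one_of_odd_order (n := 3) (by decide)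
      (by rw [← pow_mul, show 2 * 3 = orderOf χ from hχ.symm, pow_orderOf_eq_one])
    rwa [orderOf_pow_of_dvd two_ne_zero (by rw [hχ]; norm_num), hχ, ← pow_mul, hχ2, one_mul]
      at h
  have h33 : gaussSum (χ ^ 3) ψ ^ 2 = (χ ^ 3) (-1) * Fintype.card F :=
    gaussSum_sq (hne 3 three_ne_zero (by norm_num))
      (hχη ▸ (quadraticChar_isQuadratic F).comp _) hψ
  have hsign : (χ ^ 3) (-1) * (χ ^ 3) (-1) = 1 := by
    rw [← map_mul, neg_one_mul, neg_neg, map_one]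
  have hc : (χ ^ 2) 2 ≠ 0 := MulChar.apply_ne_zero_iff.mpr (Ring.two_ne_zero hF).isUnit
  refine mul_right_cancel₀
    (gaussSum_ne_zero_of_nontrivial hR (hne 4 four_ne_zero (by norm_num)) hψ) ?_
  field_simp
  linear_combination gaussSum (χ ^ 2) ψ ^ 2 * h24 -
    (χ ^ 3) (-1) * gaussSum (χ ^ 3) ψ * gaussSum (χ ^ 2) ψ * hHD -
    gaussSum (χ ^ 2) ψ ^ 2 * (χ ^ 3) (-1) * h33 -
    gaussSum (χ ^ 2) ψ ^ 2 * Fintype.card F * hsign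

theorem gaussSum_pow_four_pow_three_of_orderOf_eq_six (hF : ringChar F ≠ 2)
    (hR : (Fintype.card F : R) ≠ 0) {χ : MulChar F R} (hχ : orderOf χ = 6) (hχη : χ ^ 3 = η)
    {ψ : AddChar F R} (hψ : ψ.IsPrimitive) :
    gaussSum (χ ^ 4) ψ ^ 3 * ((χ ^ 4) 2)⁻¹ =
      (χ ^ 3) (-1) * gaussSum (χ ^ 3) ψ * gaussSum (χ ^ 5) ψ * gaussSum (χ ^ 4) ψ := by
  have h5 (n : ℕ) : (χ ^ 5) ^ n = χ ^ (5 * n % 6) := by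
    rw [← pow_mul, ← hχ, pow_mod_orderOf]
  have hχ5 : orderOf (χ ^ 5) = 6 := (Nat.Coprime.orderOf_pow (by rw [hχ]; decide)).trans hχ
  simpa only [h5] using
    gaussSum_pow_two_pow_three_of_orderOf_eq_six hF hR hχ5 ((h5 3).trans hχη) hψ

end

section

variable {F R : Type*} [Field F] [Fintype F] [CommRing R]
  [HasEnoughRootsOfUnity R (Monoid.exponent Fˣ)] {ω : MulChar F R}

theorem orderOf_eq_card_sub_one_of_forall_eq_zpow (hω : ∀ χ : MulChar F R, ∃ m : ℤ, χ = ω ^ m) :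
    orderOf ω = Fintype.card F - 1 := by
  classical
  rw [orderOf_eq_card_of_forall_mem_zpowers fun χ ↦ (hω χ).imp fun m hm ↦ hm.symm,
    MulChar.card_eq_card_units_of_hasEnoughRootsOfUnity, Nat.card_eq_fintype_card,
    Fintype.card_units]

theorem orderOf_pow_of_forall_eq_zpow (hω : ∀ χ : MulChar F R, ∃ m : ℤ, χ = ω ^ m)
    {n k : ℕ} (hk : Fintype.card F - 1 = n * k) (hk0 : k ≠ 0) :
    orderOf (ω ^ k) = n := by
  have hωord : orderOf ω = n * k := (orderOf_eq_card_sub_one_of_forall_eq_zpow hω).trans hk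
  rw [orderOf_pow_of_dvd hk0 (hωord ▸ dvd_mul_left k n), hωord,
    Nat.mul_div_cancel _ (Nat.pos_of_ne_zero hk0)]

theorem apply_neg_one_eq_neg_one_of_forall_eq_zpow [IsDomain R] (hF : ringChar F ≠ 2)
    (hω : ∀ χ : MulChar F R, ∃ m : ℤ, χ = ω ^ m) :
    ω (-1) = -1 := by
  obtain ⟨χ, hχ⟩ := MulChar.exists_apply_ne_one_of_hasEnoughRootsOfUnity F R
    (Ring.neg_one_ne_one_of_char_ne_two hF)
  obtain ⟨n, rfl⟩ : χ ∈ Submonoid.powers ω := mem_powers_iff_mem_zpowers.mpr <| by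
    obtain ⟨m, rfl⟩ := hω χ
    exact Subgroup.zpow_mem_zpowers ω m
  have hsq : ω (-1) * ω (-1) = 1 := by rw [← map_mul, neg_one_mul, neg_neg, map_one]
  refine (mul_self_eq_one_iff.mp hsq).resolve_left fun h ↦ hχ ?_
  rw [← Units.coe_neg_one, MulChar.pow_apply_coe, Units.coe_neg_one, h, one_pow]

end

/-- For `q ≡ 1 (mod 3)`, with `q^× = q - 1`:
`g(q^×/3)^3 ω(2)^{-q^×/3} = (-1)^{q^×/2} g(q^×/2) g(q^×/6) g(q^×/3)` and
`g(2q^×/3)^3 ω(2)^{-2q^×/3} = (-1)^{q^×/2} g(q^×/2) g(5q^×/6) g(2q^×/3)`. -/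
theorem gauss_sum_cubic_identity
    (F : Type) [Field F] [Fintype F] [DecidableEq F] (hodd : Odd (Fintype.card F))
    (h3 : Fintype.card F % 3 = 1)
    (ω : MulChar F ℂ) (hω : ∀ χ : MulChar F ℂ, ∃ m : ℤ, χ = ω ^ m)
    (Θ : AddChar F ℂ) (hΘ : Θ ≠ 1)
    (g : ℤ → ℂ) (hg : ∀ m : ℤ, g m = ∑ x : Fˣ, (ω ^ m) (x : F) * Θ (x : F)) :
    g (((Fintype.card F - 1) / 3 : ℕ)) ^ 3 *
        (ω 2) ^ (-(((Fintype.card F - 1) / 3 : ℕ) : ℤ)) =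
      (-1 : ℂ) ^ ((Fintype.card F - 1) / 2) * g (((Fintype.card F - 1) / 2 : ℕ)) *
        g (((Fintype.card F - 1) / 6 : ℕ)) * g (((Fintype.card F - 1) / 3 : ℕ)) ∧
    g ((2 * (Fintype.card F - 1) / 3 : ℕ)) ^ 3 *
        (ω 2) ^ (-((2 * (Fintype.card F - 1) / 3 : ℕ) : ℤ)) =
      (-1 : ℂ) ^ ((Fintype.card F - 1) / 2) * g (((Fintype.card F - 1) / 2 : ℕ)) *
        g ((5 * (Fintype.card F - 1) / 6 : ℕ)) * g ((2 * (Fintype.card F - 1) / 3 : ℕ)) := by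
  have hq2 := Nat.odd_iff.mp hodd
  have hF : ringChar F ≠ 2 := mt FiniteField.even_card_iff_char_two.mp (by omega)
  obtain ⟨k, hk⟩ : ∃ k, Fintype.card F - 1 = 6 * k := ⟨(Fintype.card F - 1) / 6, by omega⟩
  have hk0 : k ≠ 0 := by have := Fintype.one_lt_card (α := F); omega
  have hω1 := apply_neg_one_eq_neg_one_of_forall_eq_zpow hF hω
  set χ := ω ^ k
  have hχ : orderOf χ = 6 := orderOf_pow_of_forall_eq_zpow hω hk hk0
  have hχη : χ ^ 3 = (quadraticChar F).ringHomComp (Int.castRingHom ℂ) := by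
    rw [quadraticChar_ringHomComp_eq_pow hF hω1, ← pow_mul]
    congr 1
    omega
  have hψ := AddChar.IsPrimitive.of_ne_one hΘ
  have hR : (Fintype.card F : ℂ) ≠ 0 := Nat.cast_ne_zero.mpr Fintype.card_ne_zero
  have hgχ (n : ℕ) : g (k * n : ℕ) = gaussSum (χ ^ n) Θ := by
    rw [hg, ← sum_units_mul_eq_gaussSum, ← pow_mul, zpow_natCast]
  have hω2 (n : ℕ) (hn : n ≠ 0) : (ω 2) ^ (-((k * n : ℕ) : ℤ)) = ((χ ^ n) 2)⁻¹ := by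
    rw [zpow_neg, zpow_natCast, ← pow_mul, MulChar.pow_apply' _ (mul_ne_zero hk0 hn)]
  have hsign : (-1 : ℂ) ^ (k * 3) = (χ ^ 3) (-1) := by
    rw [← pow_mul, MulChar.pow_apply' _ (mul_ne_zero hk0 three_ne_zero), hω1]
  rw [hk, show 6 * k / 3 = k * 2 by omega, show 2 * (6 * k) / 3 = k * 4 by omega,
    show 6 * k / 2 = k * 3 by omega, show 6 * k / 6 = k * 1 by omega,
    show 5 * (6 * k) / 6 = k * 5 by omega]
  simp only [hgχ, hω2 _ two_ne_zero, hω2 _ four_ne_zero, hsign, pow_one]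
  exact ⟨gaussSum_pow_two_pow_three_of_orderOf_eq_six hF hR hχ hχη hψ,
    gaussSum_pow_four_pow_three_of_orderOf_eq_six hF hR hχ hχη hψ⟩
end

section
/- Let q be an odd prime power with q ≡ 1 (mod 4), ω a generator of the multiplicative characters of F_q^×, and write q^× = q−1. Then ω(2)^{q^×/2} = (−1)^{q^×/4}. -/
/-- For `q ≡ 1 (mod 4)` and a generator `ω` of the multiplicative characters of `F_q^×`,
`ω(2)^{(q-1)/2} = (-1)^{(q-1)/4}`. -/
theorem omega_two_pow
    (F : Type) [Field F] [Fintype F] (hodd : Odd (Fintype.card F))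
    (h4 : Fintype.card F % 4 = 1)
    (ω : MulChar F ℂ) (hω : ∀ χ : MulChar F ℂ, ∃ m : ℤ, χ = ω ^ m) :
    (ω 2) ^ ((Fintype.card F - 1) / 2) = (-1 : ℂ) ^ ((Fintype.card F - 1) / 4) := by
  classical
  set q := Fintype.card F with hq
  have hq2 : 2 ≤ q := Fintype.one_lt_card
  have hq5 : 5 ≤ q := by
    obtain ⟨r, hr⟩ := hodd
    omega
  -- char ≠ 2, so 2 ≠ 0
  have hchar : ringChar F ≠ 2 := by
    intro h
    have h2 := (FiniteField.even_card_iff_char_two (F := F)).mp h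
    rw [← hq] at h2
    omega
  have h2ne : (2 : F) ≠ 0 := Ring.two_ne_zero hchar
  -- q % 8 is 1 or 5
  have h8 : q % 8 = 1 ∨ q % 8 = 5 := by omega
  rcases h8 with h8 | h8
  · -- q ≡ 1 mod 8 : 2 is a square, both sides are 1
    have hsq : IsSquare (2 : F) := by
      rw [FiniteField.isSquare_two_iff, ← hq]
      omega
    obtain ⟨c, hc⟩ := hsq
    have hcne : c ≠ 0 := by
      intro h; rw [h, mul_zero] at hc; exact h2ne hc
    have : ω 2 ^ ((q - 1) / 2) = ω (c ^ (q - 1)) := by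
      rw [hc, ← sq, map_pow, map_pow, ← pow_mul]
      congr 1
      omega
    rw [this, FiniteField.pow_card_sub_one_eq_one c hcne, map_one]
    have : Even ((q - 1) / 4) := ⟨(q - 1) / 8, by omega⟩
    rw [this.neg_one_pow]
  · -- q ≡ 5 mod 8 : 2 is a nonsquare
    have hnsq : ¬ IsSquare (2 : F) := by
      rw [FiniteField.isSquare_two_iff, ← hq]
      omega
    -- the unit 2
    have h2u : IsUnit (2 : F) := isUnit_iff_ne_zero.mpr h2ne
    set u : Fˣ := h2u.unit with hu
    have huval : (u : F) = 2 := h2u.unit_spec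
    obtain ⟨g, hg⟩ := IsCyclic.exists_generator (α := Fˣ)
    obtain ⟨k, hk⟩ := hg u
    set φ := MulChar.mulEquivToUnitHom ω with hφ
    -- order of ω is q - 1
    have hcard : Nat.card (MulChar F ℂ) = q - 1 := by
      have : NeZero (Monoid.exponent Fˣ) := ⟨Monoid.exponent_ne_zero_of_finite⟩
      rw [MulChar.card_eq_card_units_of_hasEnoughRootsOfUnity F ℂ,
        Nat.card_eq_fintype_card, Fintype.card_units, hq]
    have hordω : orderOf ω = q - 1 := by
      rw [orderOf_eq_card_of_forall_mem_zpowers, hcard]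
      intro χ
      obtain ⟨m, hm⟩ := hω χ
      exact ⟨m, hm.symm⟩
    have hφdef : φ = ω.toUnitHom := rfl
    have hpow : (φ g) ^ (q - 1) = 1 := by
      rw [← map_pow, ← Fintype.card_units (α := F), pow_card_eq_one, map_one]
    -- order of φ g is q - 1
    have hordg : orderOf (φ g) = q - 1 := by
      refine Nat.dvd_antisymm (orderOf_dvd_of_pow_eq_one hpow) ?_
      rw [← hordω]
      refine orderOf_dvd_of_pow_eq_one ?_
      set m := orderOf (φ g) with hm
      ext a
      obtain ⟨l, hl⟩ := hg a
      rw [MulChar.pow_apply_coe, MulChar.one_apply_coe, ← MulChar.coe_toUnitHom, ← hφdef,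
        ← hl, ← Units.val_pow_eq_pow_val, map_zpow, ← zpow_natCast ((φ g) ^ l),
        ← zpow_mul, mul_comm, zpow_mul, zpow_natCast, pow_orderOf_eq_one, one_zpow,
        Units.val_one]
    -- (φ g) ^ ((q-1)/2) = -1
    have hhalf : (φ g) ^ ((q - 1) / 2) = -1 := by
      have hsq1 : ((φ g) ^ ((q - 1) / 2)) ^ 2 = 1 := by
        rw [← pow_mul]
        have : (q - 1) / 2 * 2 = q - 1 := by omega
        rw [this, ← hordg, pow_orderOf_eq_one]
      have hne1 : (φ g) ^ ((q - 1) / 2) ≠ 1 := by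
        intro h
        have := orderOf_dvd_of_pow_eq_one h
        rw [hordg] at this
        have := Nat.le_of_dvd (by omega) this
        omega
      have : (φ g) ^ ((q - 1) / 2) = 1 ∨ (φ g) ^ ((q - 1) / 2) = -1 := by
        have h' := congrArg (Units.val) hsq1
        rw [Units.val_pow_eq_pow_val, sq, Units.val_one] at h'
        rcases mul_self_eq_one_iff.mp h' with h' | h'
        · left; exact Units.ext h'
        · right; exact Units.ext (by rw [h']; simp)
      tauto
    -- k is odd
    have hkodd : Odd k := by
      rcases Int.even_or_odd k with he | ho
      · exfalso
        obtain ⟨j, hj⟩ := he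
        apply hnsq
        refine ⟨(g ^ j : Fˣ), ?_⟩
        rw [← huval, ← hk, hj, ← Units.val_mul, ← zpow_add]
      · exact ho
    -- compute
    have hω2 : ω 2 = ((φ u : ℂˣ) : ℂ) := by
      rw [← huval, hφ]
      exact (MulChar.coe_toUnitHom ω u).symm
    rw [hω2, ← Units.val_pow_eq_pow_val, ← hk, map_zpow, ← zpow_natCast ((φ g) ^ k),
      ← zpow_mul, mul_comm, zpow_mul, zpow_natCast, hhalf]
    have hodd4 : Odd ((q - 1) / 4) := ⟨(q - 5) / 8, by omega⟩
    rw [hodd4.neg_one_pow, Units.val_zpow_eq_zpow_val, Units.val_neg, Units.val_one,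
      hkodd.neg_one_zpow]
end

section
/- Let q = p^u be an odd prime power and (γ, δ, N) a gamma triple with N | q−1. For integers m define s_δ(m) as the multiplicity of e^{2πi m/(q−1)} as a root of the gcd polynomial D_δ(T) of the numerator ∏_{γ_i<0}(T^{−γ_i} − ζ_N^{δ_i}) and denominator ∏_{γ_i>0}(T^{γ_i} − ζ_N^{−δ_i}). Then for every k coprime to q−1 and every integer m, s_δ(m) = s_{kδ}(km). -/
open Polynomial

/-- `ζ_N = e^{2πi/N}`. -/
noncomputable def zetaN (N : ℕ) : ℂ := Complex.exp (2 * Real.pi * Complex.I / N)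

/-- The gcd polynomial `D_δ(T)` of `∏_{γ_i<0}(T^{-γ_i} - ζ_N^{δ_i})` and
`∏_{γ_i>0}(T^{γ_i} - ζ_N^{-δ_i})`. -/
noncomputable def Dpoly (d : ℕ) (γ δ : Fin (d + 2) → ℤ) (N : ℕ) : Polynomial ℂ :=
  EuclideanDomain.gcd
    (∏ i ∈ Finset.univ.filter (fun i => γ i < 0),
      (X ^ (-(γ i)).toNat - C (zetaN N ^ (δ i))))
    (∏ i ∈ Finset.univ.filter (fun i => 0 < γ i),
      (X ^ (γ i).toNat - C (zetaN N ^ (-(δ i)))))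

/-- `s_δ(m)`: the multiplicity of `e^{2πim/(q-1)}` as a root of `D_δ(T)`. -/
noncomputable def sMult (q d : ℕ) (γ δ : Fin (d + 2) → ℤ) (N : ℕ) (m : ℤ) : ℕ :=
  (Dpoly d γ δ N).rootMultiplicity
    (Complex.exp (2 * Real.pi * Complex.I * m / ((q : ℂ) - 1)))

/-!
Over `ℂ` the multiplicity of a root of a gcd is the minimum of its multiplicities in the two
arguments, and every factor `T^a - c` is separable, so `s_δ(m)` is the minimum of two counts of
indices `i` with `x^{|γ_i|} = ζ_N^{±δ_i}`, where `x = ω^m` and `ω = e^{2πi/(q-1)}`. Both sides of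
such an equation are `(q-1)`-th roots of unity, on which `z ↦ z^k` is injective for `k` coprime
to `q-1`; it sends `x` to `ω^{km}` and `ζ_N^{±δ_i}` to `ζ_N^{±kδ_i}`, so the counts for `(δ, m)`
and `(kδ, km)` agree.
-/

open Finset

theorem rootMultiplicity_euclideanDomain_gcd {K : Type*} [Field K] [DecidableEq K[X]]
    {p q : K[X]} (hp : p ≠ 0) (hq : q ≠ 0) (a : K) :
    (EuclideanDomain.gcd p q).rootMultiplicity a =
      min (p.rootMultiplicity a) (q.rootMultiplicity a) := by
  have hg : EuclideanDomain.gcd p q ≠ 0 := fun h => hp (EuclideanDomain.gcd_eq_zero_iff.mp h).1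
  refine eq_of_forall_le_iff fun j => ?_
  rw [le_min_iff, le_rootMultiplicity_iff hg, le_rootMultiplicity_iff hp,
    le_rootMultiplicity_iff hq]
  exact ⟨fun h => ⟨h.trans (EuclideanDomain.gcd_dvd_left p q),
    h.trans (EuclideanDomain.gcd_dvd_right p q)⟩, fun h => EuclideanDomain.dvd_gcd h.1 h.2⟩

theorem rootMultiplicity_X_pow_sub_C {K : Type*} [Field K] [CharZero K] [DecidableEq K] {n : ℕ}
    (hn : n ≠ 0) {c : K} (hc : c ≠ 0) (x : K) :
    (X ^ n - C c).rootMultiplicity x = if x ^ n = c then 1 else 0 := by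
  rw [← count_roots, Multiset.count_eq_of_nodup
    (nodup_roots (separable_X_pow_sub_C c (Nat.cast_ne_zero.mpr hn) hc))]
  exact if_congr (mem_nthRoots (Nat.pos_of_ne_zero hn)) rfl rfl

theorem rootMultiplicity_finset_prod {R ι : Type*} [CommRing R] [IsDomain R] (s : Finset ι)
    (f : ι → R[X]) (hf : ∀ i ∈ s, f i ≠ 0) (x : R) :
    (∏ i ∈ s, f i).rootMultiplicity x = ∑ i ∈ s, (f i).rootMultiplicity x := by
  classical
  rw [← count_roots, roots_prod f s (prod_ne_zero_iff.mpr hf), Multiset.count_bind,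
    sum_eq_multiset_sum]
  simp only [count_roots]

theorem rootMultiplicity_prod_X_pow_sub_C {K ι : Type*} [Field K] [CharZero K] [DecidableEq K]
    (s : Finset ι) {a : ι → ℕ} {c : ι → K} (ha : ∀ i ∈ s, a i ≠ 0) (hc : ∀ i ∈ s, c i ≠ 0)
    (x : K) :
    (∏ i ∈ s, (X ^ a i - C (c i))).rootMultiplicity x = #{i ∈ s | x ^ a i = c i} := by
  rw [rootMultiplicity_finset_prod _ _ fun i hi => X_pow_sub_C_ne_zero
    (Nat.pos_of_ne_zero (ha i hi)) _, card_filter]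
  exact sum_congr rfl fun i hi => rootMultiplicity_X_pow_sub_C (ha i hi) (hc i hi) x

theorem zetaN_ne_zero (N : ℕ) : zetaN N ≠ 0 := Complex.exp_ne_zero _

theorem rootMultiplicity_Dpoly (d : ℕ) (γ δ : Fin (d + 2) → ℤ) (N : ℕ) (x : ℂ) :
    (Dpoly d γ δ N).rootMultiplicity x =
      min #{i | γ i < 0 ∧ x ^ (-γ i).toNat = zetaN N ^ δ i}
        #{i | 0 < γ i ∧ x ^ (γ i).toNat = zetaN N ^ (-δ i)} := by
  have hneg : ∀ i ∈ univ.filter (fun i => γ i < 0), (-γ i).toNat ≠ 0 := by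
    simp only [mem_filter]; omega
  have hpos : ∀ i ∈ univ.filter (fun i => 0 < γ i), (γ i).toNat ≠ 0 := by
    simp only [mem_filter]; omega
  have hζ (e : ℤ) : zetaN N ^ e ≠ 0 := zpow_ne_zero _ (zetaN_ne_zero N)
  rw [Dpoly, rootMultiplicity_euclideanDomain_gcd
      (prod_ne_zero_iff.mpr fun i hi => X_pow_sub_C_ne_zero (Nat.pos_of_ne_zero (hneg i hi)) _)
      (prod_ne_zero_iff.mpr fun i hi => X_pow_sub_C_ne_zero (Nat.pos_of_ne_zero (hpos i hi)) _),
    rootMultiplicity_prod_X_pow_sub_C _ hneg fun _ _ => hζ _,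
    rootMultiplicity_prod_X_pow_sub_C _ hpos fun _ _ => hζ _, filter_filter, filter_filter]

theorem zetaN_pow_self (N : ℕ) : zetaN N ^ N = 1 := by
  rcases eq_or_ne N 0 with rfl | hN
  · exact pow_zero _
  rw [zetaN, ← Complex.exp_nat_mul, mul_div_cancel₀ _ (Nat.cast_ne_zero.mpr hN),
    Complex.exp_two_pi_mul_I]

theorem exp_eq_zetaN_zpow (n : ℕ) (m : ℤ) :
    Complex.exp (2 * Real.pi * Complex.I * m / n) = zetaN n ^ m := by
  rw [zetaN, ← Complex.exp_int_mul]
  ring_nf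

theorem zpow_eq_zpow_iff_of_isCoprime {G₀ : Type*} [CommGroupWithZero G₀] {u v : G₀}
    (hu : u ≠ 0) (hv : v ≠ 0) {k n : ℤ} (hkn : IsCoprime k n) (hun : u ^ n = 1)
    (hvn : v ^ n = 1) : u ^ k = v ^ k ↔ u = v := by
  refine ⟨fun h => ?_, congrArg (· ^ k)⟩
  obtain ⟨a, b, hab⟩ := hkn
  have hw : u / v ≠ 0 := div_ne_zero hu hv
  rw [← div_eq_one_iff_eq hv]
  calc u / v = (u / v) ^ (a * k + b * n) := by rw [hab, zpow_one]
    _ = ((u / v) ^ k) ^ a * ((u / v) ^ n) ^ b := by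
      rw [zpow_add₀ hw, mul_comm a, mul_comm b, zpow_mul, zpow_mul]
    _ = 1 := by simp [div_zpow, h, hun, hvn, div_self (zpow_ne_zero k hv)]

theorem zetaN_zpow_zpow_self (n : ℕ) (j : ℤ) : (zetaN n ^ j) ^ (n : ℤ) = 1 := by
  rw [← zpow_mul, mul_comm, zpow_mul, zpow_natCast, zetaN_pow_self, one_zpow]

theorem zetaN_zpow_mul_pow_eq_iff {n N : ℕ} (hNn : N ∣ n) {k : ℤ} (hkn : IsCoprime k n)
    (m e : ℤ) (a : ℕ) :
    (zetaN n ^ (k * m)) ^ a = zetaN N ^ (k * e) ↔ (zetaN n ^ m) ^ a = zetaN N ^ e := by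
  have hx : ((zetaN n ^ m) ^ a) ^ (n : ℤ) = 1 := by
    rw [← zpow_natCast _ a, ← zpow_mul (zetaN n), zetaN_zpow_zpow_self]
  have hζ : (zetaN N ^ e) ^ (n : ℤ) = 1 := by
    obtain ⟨t, rfl⟩ := hNn
    rw [Nat.cast_mul, zpow_mul, zetaN_zpow_zpow_self, one_zpow]
  have hxk : (zetaN n ^ (k * m)) ^ a = ((zetaN n ^ m) ^ a) ^ k := by
    simp only [← zpow_natCast, ← zpow_mul]
    ring_nf
  rw [hxk, mul_comm k, zpow_mul]
  exact zpow_eq_zpow_iff_of_isCoprime (pow_ne_zero _ (zpow_ne_zero _ (zetaN_ne_zero n)))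
    (zpow_ne_zero _ (zetaN_ne_zero N)) hkn hx hζ

theorem sMult_eq_sMult_smul_general (q : ℕ) (hodd : Odd q)
    (d : ℕ) (γ δ : Fin (d + 2) → ℤ)
    (N : ℕ) (hNdvd : N ∣ q - 1)
    (k : ℤ) (hk : IsCoprime k ((q : ℤ) - 1)) (m : ℤ) :
    sMult q d γ δ N m = sMult q d γ (fun i => k * δ i) N (k * m) := by
  obtain ⟨n, rfl⟩ : ∃ n, q = n + 1 := Nat.exists_eq_add_one.mpr hodd.pos
  rw [Nat.add_sub_cancel] at hNdvd
  have hkn : IsCoprime k n := by simpa using hk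
  simp only [sMult, rootMultiplicity_Dpoly, Nat.cast_add_one, add_sub_cancel_right,
    exp_eq_zetaN_zpow, ← mul_neg, zetaN_zpow_mul_pow_eq_iff hNdvd hkn]

/-- For a gamma triple `(γ, δ, N)` with `N ∣ q-1` and `k` coprime to `q-1`:
`s_δ(m) = s_{kδ}(km)`. -/
theorem sMult_eq_sMult_smul (q : ℕ) (hq : IsPrimePow q) (hodd : Odd q)
    (d : ℕ) (γ δ : Fin (d + 2) → ℤ)
    (hsum : ∑ i, γ i = 0) (hgcd : Finset.univ.gcd γ = 1)
    (N : ℕ) (hN : 0 < N) (hNdvd : N ∣ q - 1)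
    (k : ℤ) (hk : IsCoprime k ((q : ℤ) - 1)) (m : ℤ) :
    sMult q d γ δ N m = sMult q d γ (fun i => k * δ i) N (k * m) :=
  sMult_eq_sMult_smul_general q hodd d γ δ N hNdvd k hk m
end

section
/- Let q be an odd prime power, (γ, δ, N) a gamma triple with N | q−1, t ∈ F_q^×, and let σ_k ∈ Gal(ℚ(ζ_{q−1})/ℚ) correspond to k ∈ (ℤ/(q−1)ℤ)^× via σ_k(ζ_{q−1}) = ζ_{q−1}^k. Then σ_k(F_q(γ, δ, N | t)) = F_q(γ, kδ, N | t). -/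
/-!
Since `σ(ζ_{q-1}) = ζ_{q-1}^k`, the embedding `σ` acts on `(q-1)`-th roots of unity as `z ↦ z^k`,
so it sends every multiplicative character `χ` of `F` to `χ^k`; being injective, it sends the
nontrivial additive character `Θ` to a shift `x ↦ Θ(bx)` with `b ≠ 0`. Hence
`σ(g(a)) = ω(b)^{-ka} g(ka)`, and the factors `ω(b)^{…}` cancel in the product of Gauss-sum
ratios because `Σ γᵢ = 0`. Applying `σ` to the coefficients of `D_δ` gives `D_{kδ}`, whence
`s_δ(m) = s_{kδ}(km)`. So `σ` carries the summand of index `m` of `F_q(γ, δ, N | t)` to the summand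
of index `km mod (q-1)` of `F_q(γ, kδ, N | t)`, and `m ↦ km` permutes the residues mod `q-1`.
-/

open Polynomial

/-- The Gauss sum `g(m) = Σ_{x∈F^×} ω^m(x) Θ(x)`. -/
noncomputable def gSum (F : Type) [Field F] [Fintype F] [DecidableEq F]
    (ω : MulChar F ℂ) (Θ : AddChar F ℂ) (m : ℤ) : ℂ :=
  ∑ x : Fˣ, (ω ^ m) (x : F) * Θ (x : F)

/-- The finite hypergeometric sum `F_q(γ, δ, N | t)` of a gamma triple. -/
noncomputable def Fhyp (F : Type) [Field F] [Fintype F] [DecidableEq F]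
    (ω : MulChar F ℂ) (Θ : AddChar F ℂ)
    (d : ℕ) (γ δ : Fin (d + 2) → ℤ) (N : ℕ) (t : F) : ℂ :=
  (1 / (1 - (Fintype.card F : ℂ))) *
    ∑ m ∈ Finset.range (Fintype.card F - 1),
      (∏ i, gSum F ω Θ (-(γ i) * (m : ℤ) + δ i * (((Fintype.card F - 1) / N : ℕ) : ℤ)) /
            gSum F ω Θ (δ i * (((Fintype.card F - 1) / N : ℕ) : ℤ))) *
      (Fintype.card F : ℂ) ^
        ((sMult (Fintype.card F) d γ δ N (-(m : ℤ)) : ℤ) -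
         (sMult (Fintype.card F) d γ δ N 0 : ℤ)) *
      (ω ((∏ i, (γ i : F) ^ (γ i)) * t)) ^ m

theorem RingHom.map_eq_pow_of_pow_eq_one {R : Type*} [CommRing R] [IsDomain R] {σ : R →+* R}
    {n k : ℕ} [NeZero n] {ζ : R} (hζ : IsPrimitiveRoot ζ n) (hσ : σ ζ = ζ ^ k) {z : R}
    (hz : z ^ n = 1) : σ z = z ^ k := by
  obtain ⟨i, -, rfl⟩ := hζ.eq_pow_of_pow_eq_one hz
  rw [map_pow, hσ, ← pow_mul, mul_comm, pow_mul]

theorem MulChar.ringHomComp_eq_pow {F R : Type*} [Field F] [Fintype F] [CommRing R]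
    {σ : R →+* R} {k : ℕ} (hσ : ∀ z : R, z ^ (Fintype.card F - 1) = 1 → σ z = z ^ k)
    (χ : MulChar F R) : χ.ringHomComp σ = χ ^ k := by
  ext u
  rw [ringHomComp_apply, pow_apply_coe,
    hσ _ (by rw [← map_pow, FiniteField.pow_card_sub_one_eq_one _ u.ne_zero, map_one])]

theorem MulChar.pow_apply_pow_eq_apply_pow_mul_mod {F R : Type*} [Field F] [Fintype F]
    [CommMonoidWithZero R] (χ : MulChar F R) (c : F) {k m : ℕ}
    (hk : k.Coprime (Fintype.card F - 1)) (hm : m < Fintype.card F - 1) :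
    (χ ^ k) c ^ m = χ c ^ (k * m % (Fintype.card F - 1)) := by
  by_cases hc : IsUnit c
  · obtain ⟨u, rfl⟩ := hc
    rw [pow_apply_coe, ← pow_mul, pow_eq_pow_mod _ (by rw [← map_pow,
      FiniteField.pow_card_sub_one_eq_one _ u.ne_zero, map_one])]
  · rw [map_nonunit _ hc, map_nonunit _ hc]
    -- as `0 ^ 0 = 1`, this case needs `k * m % (q - 1) = 0 ↔ m = 0`, i.e. coprimality
    rcases Nat.eq_zero_or_pos m with rfl | hm0
    · simp
    · have : ¬ Fintype.card F - 1 ∣ k * m := fun h =>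
        (Nat.not_dvd_of_pos_of_lt hm0 hm) ((Nat.Coprime.symm hk).dvd_of_dvd_mul_left h)
      rw [zero_pow hm0.ne', zero_pow (fun h => this (Nat.dvd_of_mod_eq_zero h))]

theorem AddChar.exists_mulShift_eq_of_ne_one {F : Type*} [Field F] [Fintype F]
    {Θ : AddChar F ℂ} (hΘ : Θ ≠ 1) (ψ : AddChar F ℂ) : ∃ b, Θ.mulShift b = ψ :=
  ((Fintype.bijective_iff_injective_and_card _).mpr
    ⟨to_mulShift_inj_of_isPrimitive (IsPrimitive.of_ne_one hΘ), card_eq.symm⟩).2 ψ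

theorem AddChar.exists_unit_ringHom_comp_eq_mulShift {F : Type*} [Field F] [Fintype F]
    {Θ : AddChar F ℂ} (hΘ : Θ ≠ 1) (σ : ℂ →+* ℂ) : ∃ b : Fˣ, ∀ x, σ (Θ x) = Θ (b * x) := by
  obtain ⟨b, hb⟩ := exists_mulShift_eq_of_ne_one hΘ ((σ : ℂ →* ℂ).compAddChar Θ)
  have hb0 : b ≠ 0 := by
    rintro rfl
    apply hΘ
    apply MonoidHom.compAddChar_injective_right (σ : ℂ →* ℂ) σ.injective
    change (σ : ℂ →* ℂ).compAddChar Θ = (σ : ℂ →* ℂ).compAddChar 1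
    rw [← hb, mulShift_zero]
    ext; simp
  exact ⟨Units.mk0 b hb0, fun x => by simpa using (DFunLike.congr_fun hb x).symm⟩

theorem Finset.sum_range_mul_mod_eq {M : Type*} [AddCommMonoid M] {n k : ℕ} (hk : k.Coprime n)
    (f : ℕ → M) : ∑ m ∈ range n, f (k * m % n) = ∑ m ∈ range n, f m := by
  have hinj : Set.InjOn (fun m => k * m % n) (range n) := fun a ha b hb h =>
    Nat.ModEq.eq_of_lt_of_lt (Nat.ModEq.cancel_left_of_coprime (Nat.coprime_comm.mp hk) h)
      (mem_range.mp ha) (mem_range.mp hb)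
  have himage : (range n).image (fun m => k * m % n) = range n :=
    eq_of_subset_of_card_le
      (fun j hj => by
        obtain ⟨m, hm, rfl⟩ := mem_image.mp hj
        exact mem_range.mpr (Nat.mod_lt _ (pos_of_ne_zero (by rintro rfl; simp at hm))))
      (card_image_of_injOn hinj).ge
  rw [← sum_image hinj, himage]

theorem zetaN_isPrimitiveRoot {n : ℕ} (hn : n ≠ 0) : IsPrimitiveRoot (zetaN n) n :=
  Complex.isPrimitiveRoot_exp n hn

theorem zetaN_pow_eq_one_of_dvd {N n : ℕ} (hn : n ≠ 0) (hN : N ∣ n) : zetaN N ^ n = 1 := by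
  obtain ⟨e, rfl⟩ := hN
  rw [pow_mul, (zetaN_isPrimitiveRoot (left_ne_zero_of_mul hn)).pow_eq_one, one_pow]

theorem Dpoly_map {σ : ℂ →+* ℂ} {N k : ℕ} (hσ : σ (zetaN N) = zetaN N ^ k) (d : ℕ)
    (γ δ : Fin (d + 2) → ℤ) : (Dpoly d γ δ N).map σ = Dpoly d γ (fun i => k * δ i) N := by
  simp only [Dpoly, ← gcd_map, Polynomial.map_prod, Polynomial.map_sub, Polynomial.map_pow, map_X,
    map_C, map_zpow₀, hσ, ← zpow_natCast, ← zpow_mul, mul_comm, mul_neg]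

theorem sMult_eq_rootMultiplicity {q : ℕ} (hq : q ≠ 0) (d : ℕ) (γ δ : Fin (d + 2) → ℤ)
    (N : ℕ) (m : ℤ) :
    sMult q d γ δ N m = (Dpoly d γ δ N).rootMultiplicity (zetaN (q - 1) ^ m) := by
  rw [sMult, zetaN, ← Complex.exp_int_mul, Nat.cast_sub (Nat.one_le_iff_ne_zero.mpr hq)]
  congr 2
  push_cast
  ring

theorem zetaN_zpow_eq_zpow_of_modEq {n : ℕ} (hn : n ≠ 0) {a b : ℤ} (h : a ≡ b [ZMOD n]) :
    zetaN n ^ a = zetaN n ^ b := by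
  obtain ⟨c, hc⟩ := Int.modEq_iff_dvd.mp h
  rw [show b = a + n * c by omega, zpow_add₀ ((zetaN_isPrimitiveRoot hn).ne_zero hn), zpow_mul,
    zpow_natCast, (zetaN_isPrimitiveRoot hn).pow_eq_one, one_zpow, mul_one]

theorem sMult_mul_left {q k : ℕ} (hq : 1 < q) {σ : ℂ →+* ℂ}
    (hσ : ∀ z : ℂ, z ^ (q - 1) = 1 → σ z = z ^ k) (d : ℕ) (γ δ : Fin (d + 2) → ℤ) {N : ℕ}
    (hN : N ∣ q - 1) {m m' : ℤ} (hm : k * m ≡ m' [ZMOD (q - 1 : ℕ)]) :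
    sMult q d γ (fun i => k * δ i) N m' = sMult q d γ δ N m := by
  have hq1 : q - 1 ≠ 0 := by omega
  rw [sMult_eq_rootMultiplicity (by omega), sMult_eq_rootMultiplicity (by omega),
    ← Dpoly_map (hσ _ (zetaN_pow_eq_one_of_dvd hq1 hN)),
    eq_rootMultiplicity_map σ.injective (zetaN (q - 1) ^ m), map_zpow₀,
    hσ _ (zetaN_isPrimitiveRoot hq1).pow_eq_one, ← zpow_natCast, ← zpow_mul,
    zetaN_zpow_eq_zpow_of_modEq hq1 hm]

theorem Finset.prod_zpow_eq_zpow_sum {ι G : Type*} [CommGroup G] (s : Finset ι) (u : G)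
    (x : ι → ℤ) : ∏ i ∈ s, u ^ x i = u ^ ∑ i ∈ s, x i := by
  induction s using Finset.cons_induction <;> simp_all [zpow_add]

theorem map_prod_div_eq_of_zpow_mul_map_eq {ι K : Type*} [Field K] (s : Finset ι)
    {σ : K →+* K} {f g : ℤ → K} {u : Kˣ} (hf : ∀ a, (u ^ a : Kˣ) * σ (f a) = g a)
    {x y : ι → ℤ} (hx : ∑ i ∈ s, x i = 0) :
    σ (∏ i ∈ s, f (x i + y i) / f (y i)) = ∏ i ∈ s, g (x i + y i) / g (y i) := by
  have hratio : ∀ i, g (x i + y i) / g (y i)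
      = (u ^ x i : Kˣ) * (σ (f (x i + y i)) / σ (f (y i))) := fun i => by
    rw [← hf, ← hf, zpow_add, Units.val_mul, mul_comm ((u ^ x i : Kˣ) : K), mul_assoc,
      mul_div_mul_left _ _ (Units.ne_zero _), mul_div_assoc]
  rw [Finset.prod_congr rfl fun i _ => hratio i, Finset.prod_mul_distrib, ← Units.coe_prod,
    Finset.prod_zpow_eq_zpow_sum, hx, zpow_zero, Units.val_one, one_mul]
  simp only [map_prod, map_div₀]

section GaussSum

variable {F : Type} [Field F] [Fintype F] [DecidableEq F] (ω : MulChar F ℂ) {Θ : AddChar F ℂ}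

theorem gSum_congr {a b : ℤ} (h : a ≡ b [ZMOD (Fintype.card F - 1 : ℕ)]) :
    gSum F ω Θ a = gSum F ω Θ b := by
  rw [gSum, gSum, zpow_eq_zpow_iff_modEq.mpr
    (h.of_dvd (Int.natCast_dvd_natCast.mpr ω.orderOf_dvd_card_sub_one))]

theorem exists_zpow_mul_map_gSum (hΘ : Θ ≠ 1) {σ : ℂ →+* ℂ} {k : ℕ}
    (hσ : ∀ z : ℂ, z ^ (Fintype.card F - 1) = 1 → σ z = z ^ k) :
    ∃ u : ℂˣ, ∀ a : ℤ, (u ^ a : ℂˣ) * σ (gSum F ω Θ a) = gSum F ω Θ (k * a) := by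
  obtain ⟨b, hb⟩ := AddChar.exists_unit_ringHom_comp_eq_mulShift hΘ σ
  refine ⟨ω.toUnitHom b ^ k, fun a => ?_⟩
  simp only [gSum, map_sum, map_mul, Finset.mul_sum]
  refine Fintype.sum_equiv (Equiv.mulLeft b) _ _ fun x => ?_
  have hωb : (ω ^ (k * a)) (b : F) = (ω.toUnitHom b ^ (k * a) : ℂˣ) := by
    rw [MulChar.zpow_apply_coe, ← map_zpow, MulChar.coe_toUnitHom]
  rw [hb, ← MulChar.ringHomComp_apply, MulChar.ringHomComp_eq_pow hσ, ← zpow_natCast,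
    ← zpow_mul, ← zpow_natCast (ω ^ a), ← zpow_mul, mul_comm a, Equiv.coe_mulLeft, Units.val_mul,
    map_mul (ω ^ ((k : ℤ) * a)), hωb, mul_assoc]

end GaussSum

theorem Fhyp_galois_action_general (F : Type) [Field F] [Fintype F] [DecidableEq F]
    (ω : MulChar F ℂ)
    (Θ : AddChar F ℂ) (hΘ : Θ ≠ 1)
    (d : ℕ) (γ δ : Fin (d + 2) → ℤ)
    (hsum : ∑ i, γ i = 0)
    (N : ℕ) (hNdvd : N ∣ Fintype.card F - 1)
    (t : F)
    (k : ℕ) (hk : Nat.Coprime k (Fintype.card F - 1))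
    (σ : ℂ →+* ℂ)
    (hσ : σ (zetaN (Fintype.card F - 1)) = zetaN (Fintype.card F - 1) ^ k) :
    σ (Fhyp F ω Θ d γ δ N t) = Fhyp F ω Θ d γ (fun i => (k : ℤ) * δ i) N t := by
  have hq : 1 < Fintype.card F := Fintype.one_lt_card
  have hn : Fintype.card F - 1 ≠ 0 := by omega
  have : NeZero (Fintype.card F - 1) := ⟨hn⟩
  have hσroots : ∀ z : ℂ, z ^ (Fintype.card F - 1) = 1 → σ z = z ^ k :=
    fun z => σ.map_eq_pow_of_pow_eq_one (zetaN_isPrimitiveRoot hn) hσ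
  obtain ⟨u, hu⟩ := exists_zpow_mul_map_gSum ω hΘ hσroots
  rw [Fhyp, Fhyp, map_mul, map_sum]
  conv_rhs => rw [← Finset.sum_range_mul_mod_eq hk]
  congr 1
  · simp
  refine Finset.sum_congr rfl fun m hm => ?_
  have hj : (k : ℤ) * m ≡ ((k * m % (Fintype.card F - 1) : ℕ) : ℤ)
      [ZMOD (Fintype.card F - 1 : ℕ)] := by
    push_cast
    exact (Int.mod_modEq _ _).symm
  have hx : ∑ i, -(γ i) * (m : ℤ) = 0 := by
    rw [← Finset.sum_mul, Finset.sum_neg_distrib, hsum, neg_zero, zero_mul]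
  rw [map_mul, map_mul, map_prod_div_eq_of_zpow_mul_map_eq _ hu hx, map_zpow₀, map_natCast,
    map_pow, ← MulChar.ringHomComp_apply, MulChar.ringHomComp_eq_pow hσroots,
    MulChar.pow_apply_pow_eq_apply_pow_mul_mod _ _ hk (Finset.mem_range.mp hm),
    sMult_mul_left hq hσroots d γ δ hNdvd (m := 0) (m' := 0) (by simp),
    sMult_mul_left hq hσroots d γ δ hNdvd (m := -m) (by rw [mul_neg]; exact hj.neg)]
  congr 3 with i
  rw [← mul_assoc]
  congr 1
  apply gSum_congr
  convert (hj.mul_left (-(γ i))).add_right ((k : ℤ) * δ i * ((Fintype.card F - 1) / N : ℕ))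
    using 1
  ring

/-- Galois action: if `σ` is a field embedding of `ℂ` with `σ(ζ_{q-1}) = ζ_{q-1}^k` for
`k` coprime to `q-1` (so `σ` restricts to `σ_k ∈ Gal(ℚ(ζ_{q-1})/ℚ)`), then
`σ(F_q(γ, δ, N | t)) = F_q(γ, kδ, N | t)`. -/
theorem Fhyp_galois_action (F : Type) [Field F] [Fintype F] [DecidableEq F]
    (hodd : Odd (Fintype.card F))
    (ω : MulChar F ℂ) (hω : ∀ χ : MulChar F ℂ, ∃ m : ℤ, χ = ω ^ m)
    (Θ : AddChar F ℂ) (hΘ : Θ ≠ 1)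
    (d : ℕ) (γ δ : Fin (d + 2) → ℤ)
    (hsum : ∑ i, γ i = 0) (hgcd : Finset.univ.gcd γ = 1)
    (N : ℕ) (hN : 0 < N) (hNdvd : N ∣ Fintype.card F - 1)
    (t : F) (ht : t ≠ 0)
    (k : ℕ) (hk : Nat.Coprime k (Fintype.card F - 1))
    (σ : ℂ →+* ℂ)
    (hσ : σ (zetaN (Fintype.card F - 1)) = zetaN (Fintype.card F - 1) ^ k) :
    σ (Fhyp F ω Θ d γ δ N t) = Fhyp F ω Θ d γ (fun i => (k : ℤ) * δ i) N t :=
  Fhyp_galois_action_general F ω Θ hΘ d γ δ hsum N hNdvd t k hk σ hσ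
end

section
/- Let q be an odd prime power with q ≡ 1 (mod 2), let g be Gauss sums for a generator ω of the multiplicative characters of F_q^×, and write q^× = q−1. For every m ∉ {0, q^×/2}: g(−2m + q^×/2) = (g(q^×/2)/(q·ω(2)^{−4m}))·g(−4m)·g(2m). -/
/-!
Write `χ = ω^(-2m)` and `ρ = ω^(q^×/2)`, the quadratic character. Counting square roots with `ρ`
gives `J(ρ, χ) = χ(4) J(χ, χ)`, and expressing both Jacobi sums through Gauss sums yields the
Hasse–Davenport relation `χ(4) g(χ) g(ρχ) = g(ρ) g(χ²)`. Since `χ` is a nontrivial square,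
`g(χ) g(χ⁻¹) = χ(-1) q = q`, and dividing by `g(χ)` gives the identity.
-/

open Finset

theorem IsCyclic.eq_of_sq_eq_one {G : Type*} [Group G] [Finite G] [IsCyclic G] {x y : G}
    (hx : x ^ 2 = 1) (hy : y ^ 2 = 1) (hx1 : x ≠ 1) (hy1 : y ≠ 1) : x = y := by
  classical
  have := Fintype.ofFinite G
  by_contra hxy
  have hsub : ({1, x, y} : Finset G) ⊆ ({a : G | a ^ 2 = 1} : Finset G) := by
    intro a ha
    simp only [mem_insert, mem_singleton] at ha
    rcases ha with rfl | rfl | rfl <;> simp [*]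
  have := (card_le_card hsub).trans (IsCyclic.card_pow_eq_one_le two_pos)
  rw [card_insert_of_notMem (by simp [hx1.symm, hy1.symm]), card_pair hxy] at this
  omega

theorem IsCyclic.eq_pow_of_sq_eq_one {G : Type*} [Group G] [Finite G] [IsCyclic G] {ω x : G}
    {n : ℕ} (hω : orderOf ω = 2 * n) (hx : x ^ 2 = 1) (hx1 : x ≠ 1) : x = ω ^ n := by
  have hn : 0 < n := by
    have := orderOf_pos ω
    omega
  refine eq_of_sq_eq_one hx ?_ hx1 (pow_ne_one_of_lt_orderOf hn.ne' (by omega))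
  rw [← pow_mul, mul_comm, ← hω, pow_orderOf_eq_one]

theorem Int.dvd_or_dvd_sub_of_two_mul_dvd_two_mul {n m : ℤ} (hd : 2 * n ∣ 2 * m) :
    2 * n ∣ m ∨ 2 * n ∣ m - n := by
  obtain ⟨j, hj⟩ := hd
  obtain ⟨k, rfl | rfl⟩ := Int.even_or_odd' j
  · exact Or.inl ⟨k, by linarith⟩
  · exact Or.inr ⟨k, by linarith⟩

theorem gaussSum_eq_sum_units {R R' : Type*} [CommRing R] [Fintype R] [DecidableEq R]
    [CommRing R'] (χ : MulChar R R') (ψ : AddChar R R') :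
    gaussSum χ ψ = ∑ u : Rˣ, χ u * ψ u := by
  let val : Rˣ ↪ R := ⟨Units.val, Units.val_injective⟩
  calc gaussSum χ ψ = ∑ a ∈ univ.map val, χ a * ψ a := by
        refine (sum_subset (subset_univ _) fun a _ ha ↦ ?_).symm
        have : ¬ IsUnit a := fun ⟨u, hu⟩ ↦ ha (mem_map.mpr ⟨u, mem_univ _, hu⟩)
        rw [χ.map_nonunit this, zero_mul]
    _ = ∑ u : Rˣ, χ u * ψ u := sum_map _ _ _

theorem MulChar.zpow_apply_coe' {R R' : Type*} [CommMonoid R] [Field R'] (χ : MulChar R R')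
    (n : ℤ) (a : Rˣ) : (χ ^ n) a = χ a ^ n := by
  obtain ⟨k, rfl | rfl⟩ := Int.eq_nat_or_neg n
  · simp [pow_apply_coe]
  · simp [pow_apply_coe, inv_apply_eq_inv']

theorem MulChar.zpow_apply_sq {R R' : Type*} [Field R] [Field R'] (χ : MulChar R R') (n : ℤ)
    {a : R} (ha : a ≠ 0) : (χ ^ n) (a ^ 2) = χ a ^ (2 * n) := by
  rw [show a ^ 2 = ((Units.mk0 a ha ^ 2 : Rˣ) : R) by simp, zpow_apply_coe',
    Units.val_pow_eq_pow_val, map_pow, Units.val_mk0, ← zpow_natCast, ← zpow_mul,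
    Nat.cast_two]

theorem MulChar.sq_apply_neg_one {R R' : Type*} [CommRing R] [CommRing R'] (χ : MulChar R R') :
    (χ ^ 2) (-1) = 1 := by
  rw [pow_apply' _ two_ne_zero, ← map_pow, neg_one_sq, map_one]

theorem gaussSum_mul_gaussSum_inv {R R' : Type*} [Field R] [Fintype R] [CommRing R']
    [IsDomain R'] {χ : MulChar R R'} (hχ : χ ≠ 1) {ψ : AddChar R R'} (hψ : ψ.IsPrimitive) :
    gaussSum χ ψ * gaussSum χ⁻¹ ψ = χ (-1) * Fintype.card R := by
  rw [← mul_gaussSum_inv_eq_gaussSum χ⁻¹, mul_left_comm, gaussSum_mul_gaussSum_eq_card hχ hψ,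
    MulChar.inv_apply', inv_neg_one]

section QuadraticChar

variable {F : Type*} [Field F] [Fintype F]

theorem FiniteField.ringChar_ne_two_of_odd_card (hodd : Odd (Fintype.card F)) :
    ringChar F ≠ 2 := fun h ↦ by
  have := FiniteField.even_card_iff_char_two.mp h
  rw [Nat.odd_iff] at hodd
  omega

theorem MulChar.orderOf_eq_card_sub_one_of_forall_mem_zpowers {R : Type*} [CommRing R]
    [HasEnoughRootsOfUnity R (Monoid.exponent Fˣ)] {ω : MulChar F R}
    (hω : ∀ χ, χ ∈ Subgroup.zpowers ω) : orderOf ω = Fintype.card F - 1 := by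
  classical
  rw [orderOf_eq_card_of_forall_mem_zpowers hω, card_eq_card_units_of_hasEnoughRootsOfUnity,
    Nat.card_eq_fintype_card, Fintype.card_units]

theorem sum_comp_sq_eq_sum_quadraticChar_add_one_smul [DecidableEq F] {M : Type*}
    [AddCommGroup M] (hF : ringChar F ≠ 2) (f : F → M) :
    ∑ t, f (t ^ 2) = ∑ u, (quadraticChar F u + 1) • f u := by
  rw [← sum_fiberwise univ (· ^ 2) fun t ↦ f (t ^ 2)]
  refine sum_congr rfl fun u _ ↦ ?_
  rw [sum_congr rfl fun t ht ↦ by rw [(mem_filter.mp ht).2], sum_const,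
    ← quadraticChar_card_sqrts hF u, Set.toFinset_ofPred, natCast_zsmul]

theorem apply_four_mul_jacobiSum_self_s12 {R : Type*} [CommRing R] (hF : ringChar F ≠ 2)
    (χ : MulChar F R) : χ 4 * jacobiSum χ χ = ∑ t, χ (1 - t ^ 2) := by
  have h2 : (2 : F) ≠ 0 := Ring.two_ne_zero hF
  have hbij : Function.Bijective fun t : F ↦ (1 + t) / 2 :=
    Function.bijective_iff_has_inverse.mpr
      ⟨fun x ↦ 2 * x - 1, fun t ↦ by field_simp; ring, fun x ↦ by field_simp; ring⟩
  rw [jacobiSum, mul_sum]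
  refine (Fintype.sum_bijective _ hbij _ _ fun t ↦ ?_).symm
  rw [← map_mul, ← map_mul]
  congr 1
  field_simp
  ring

variable [DecidableEq F]

theorem jacobiSum_quadraticChar_eq_apply_four_mul_jacobiSum_self {R : Type*} [CommRing R]
    [IsDomain R] (hF : ringChar F ≠ 2) {χ : MulChar F R} (hχ : χ ≠ 1) :
    jacobiSum ((quadraticChar F).ringHomComp (Int.castRingHom R)) χ = χ 4 * jacobiSum χ χ := by
  have hsum : ∑ u, χ (1 - u) = 0 :=
    ((Equiv.subLeft 1).sum_comp χ).trans (χ.sum_eq_zero_of_ne_one hχ)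
  rw [apply_four_mul_jacobiSum_self_s12 hF, sum_comp_sq_eq_sum_quadraticChar_add_one_smul hF
    fun u ↦ χ (1 - u)]
  simp [jacobiSum, zsmul_eq_mul, add_mul, sum_add_distrib, hsum]

variable {F' : Type*} [Field F']

theorem quadraticChar_ringHomComp_ne_one (hF : ringChar F ≠ 2) (hF' : ringChar F' ≠ 2) :
    (quadraticChar F).ringHomComp (Int.castRingHom F') ≠ 1 := by
  obtain ⟨a, ha⟩ := quadraticChar_exists_neg_one' hF
  intro h1
  have := congrArg (fun φ : MulChar F F' ↦ φ a) h1
  simp only [MulChar.ringHomComp_apply, ha, MulChar.one_apply_coe] at this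
  exact Ring.neg_one_ne_one_of_char_ne_two hF' (by exact_mod_cast this)

theorem quadraticChar_ringHomComp_eq_pow_of_forall_mem_zpowers
    [HasEnoughRootsOfUnity F' (Monoid.exponent Fˣ)] (hF : ringChar F ≠ 2) (hF' : ringChar F' ≠ 2)
    {ω : MulChar F F'} (hω : ∀ χ, χ ∈ Subgroup.zpowers ω) :
    (quadraticChar F).ringHomComp (Int.castRingHom F') = ω ^ ((Fintype.card F - 1) / 2) := by
  have : IsCyclic (MulChar F F') := ⟨ω, hω⟩
  have hodd := FiniteField.odd_card_of_char_ne_two hF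
  refine IsCyclic.eq_pow_of_sq_eq_one ?_ ((quadraticChar_isQuadratic F).comp _).sq_eq_one
    (quadraticChar_ringHomComp_ne_one hF hF')
  rw [MulChar.orderOf_eq_card_sub_one_of_forall_mem_zpowers hω]
  omega

theorem gaussSum_hasseDavenport_two [IsCyclic (MulChar F F')] (hF : ringChar F ≠ 2)
    (hF' : ringChar F' ≠ 2) (hp : (Fintype.card F : F') ≠ 0) {ψ : AddChar F F'}
    (hψ : ψ.IsPrimitive) {χ : MulChar F F'} (hχ : χ ≠ 1) :
    χ 4 * (gaussSum χ ψ * gaussSum ((quadraticChar F).ringHomComp (Int.castRingHom F') * χ) ψ) =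
      gaussSum ((quadraticChar F).ringHomComp (Int.castRingHom F')) ψ * gaussSum (χ ^ 2) ψ := by
  set ρ := (quadraticChar F).ringHomComp (Int.castRingHom F')
  have hρ : ρ.IsQuadratic := (quadraticChar_isQuadratic F).comp _
  by_cases hχ2 : χ ^ 2 = 1
  · rw [IsCyclic.eq_of_sq_eq_one hχ2 hρ.sq_eq_one hχ (quadraticChar_ringHomComp_ne_one hF hF')]
    have hρ4 : ρ 4 = 1 := by
      rw [show (4 : F) = 2 ^ 2 by norm_num, MulChar.ringHomComp_apply,
        quadraticChar_sq_one' (Ring.two_ne_zero hF), map_one]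
    rw [hρ4, one_mul, sq, mul_comm]
  · have hρχ : ρ * χ ≠ 1 := by
      intro h
      rw [eq_inv_of_mul_eq_one_right h, hρ.inv] at hχ2
      exact hχ2 hρ.sq_eq_one
    have hJ := jacobiSum_mul_nontrivial (φ := χ) (by rwa [← sq]) ψ
    have hJρ := jacobiSum_mul_nontrivial hρχ ψ
    rw [jacobiSum_quadraticChar_eq_apply_four_mul_jacobiSum_self hF hχ] at hJρ
    have hJ0 : jacobiSum χ χ ≠ 0 := by
      intro h
      rw [h, mul_zero] at hJ
      exact gaussSum_ne_zero_of_nontrivial hp hχ hψ (mul_self_eq_zero.mp hJ.symm)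
    refine mul_right_cancel₀ hJ0 ?_
    rw [sq]
    linear_combination gaussSum χ ψ * hJρ - gaussSum ρ ψ * hJ

theorem gaussSum_quadraticChar_mul_eq [IsCyclic (MulChar F F')] (hF : ringChar F ≠ 2)
    (hF' : ringChar F' ≠ 2) (hp : (Fintype.card F : F') ≠ 0) {ψ : AddChar F F'}
    (hψ : ψ.IsPrimitive) {χ : MulChar F F'} (hχ : χ ≠ 1) :
    gaussSum ((quadraticChar F).ringHomComp (Int.castRingHom F') * χ) ψ =
      gaussSum ((quadraticChar F).ringHomComp (Int.castRingHom F')) ψ /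
        (χ (-1) * Fintype.card F * χ 4) * gaussSum (χ ^ 2) ψ * gaussSum χ⁻¹ ψ := by
  have h4 : IsUnit (4 : F) := by
    rw [show (4 : F) = 2 * 2 by norm_num]
    exact (mul_ne_zero (Ring.two_ne_zero hF) (Ring.two_ne_zero hF)).isUnit
  have hχ4 : χ 4 ≠ 0 := MulChar.apply_ne_zero_iff.mpr h4
  have hχ1 : χ (-1) ≠ 0 := MulChar.apply_ne_zero_iff.mpr isUnit_one.neg
  have hHD := gaussSum_hasseDavenport_two hF hF' hp hψ hχ
  have hinv := gaussSum_mul_gaussSum_inv hχ hψ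
  field_simp
  linear_combination gaussSum χ⁻¹ ψ * hHD -
    gaussSum ((quadraticChar F).ringHomComp (Int.castRingHom F') * χ) ψ * χ 4 * hinv

end QuadraticChar

/-- For `m ∉ {0, q^×/2}` (mod `q^× = q-1`):
`g(-2m + q^×/2) = (g(q^×/2)/(q ω(2)^{-4m})) g(-4m) g(2m)`. -/
theorem gauss_sum_hd_two
    (F : Type) [Field F] [Fintype F] [DecidableEq F] (hodd : Odd (Fintype.card F))
    (ω : MulChar F ℂ) (hω : ∀ χ : MulChar F ℂ, ∃ m : ℤ, χ = ω ^ m)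
    (Θ : AddChar F ℂ) (hΘ : Θ ≠ 1)
    (g : ℤ → ℂ) (hg : ∀ m : ℤ, g m = ∑ x : Fˣ, (ω ^ m) (x : F) * Θ (x : F))
    (m : ℤ) (hm0 : ¬ (((Fintype.card F : ℤ) - 1) ∣ m))
    (hm2 : ¬ (((Fintype.card F : ℤ) - 1) ∣ (m - (((Fintype.card F - 1) / 2 : ℕ) : ℤ)))) :
    g (-2 * m + (((Fintype.card F - 1) / 2 : ℕ) : ℤ)) =
      g (((Fintype.card F - 1) / 2 : ℕ)) / ((Fintype.card F : ℂ) * (ω 2) ^ (-(4 * m))) *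
        g (-4 * m) * g (2 * m) := by
  have hF := FiniteField.ringChar_ne_two_of_odd_card hodd
  have hF' : ringChar ℂ ≠ 2 := by simp [ringChar.eq_zero]
  have hgen : ∀ χ, χ ∈ Subgroup.zpowers ω := fun χ ↦ (hω χ).imp fun _ hk ↦ hk.symm
  have : IsCyclic (MulChar F ℂ) := ⟨ω, hgen⟩
  have hord := MulChar.orderOf_eq_card_sub_one_of_forall_mem_zpowers hgen
  have hρ := quadraticChar_ringHomComp_eq_pow_of_forall_mem_zpowers hF hF' hgen
  set h := (Fintype.card F - 1) / 2
  have hcard : ((Fintype.card F - 1 : ℕ) : ℤ) = 2 * h := by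
    have := Fintype.card_pos (α := F)
    rw [Nat.odd_iff] at hodd
    omega
  rw [← Nat.cast_pred Fintype.card_pos, hcard] at hm0 hm2
  set χ := ω ^ (-2 * m) with hχ
  have hχ1 : χ ≠ 1 := fun h1 ↦ by
    have hd := orderOf_dvd_iff_zpow_eq_one.mpr h1
    rw [hord, hcard, neg_mul, dvd_neg] at hd
    exact (Int.dvd_or_dvd_sub_of_two_mul_dvd_two_mul hd).elim hm0 hm2
  have hχ4 : χ 4 = ω 2 ^ (-(4 * m)) := by
    rw [show (4 : F) = 2 ^ 2 by norm_num, hχ, MulChar.zpow_apply_sq _ _ (Ring.two_ne_zero hF)]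
    ring_nf
  have hχneg : χ (-1) = 1 := by
    rw [hχ, show -2 * m = -m * (2 : ℕ) by push_cast; ring, zpow_mul, zpow_natCast,
      MulChar.sq_apply_neg_one]
  have hG : ∀ k, g k = gaussSum (ω ^ k) Θ := fun k ↦ (hg k).trans (gaussSum_eq_sum_units _ _).symm
  rw [hG, hG, hG, hG, zpow_add, zpow_natCast, ← hρ, mul_comm,
    show ω ^ (-4 * m) = χ ^ 2 by rw [hχ, ← zpow_natCast, ← zpow_mul]; ring_nf,
    show ω ^ (2 * m) = χ⁻¹ by rw [hχ, ← zpow_neg]; ring_nf,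
    gaussSum_quadraticChar_mul_eq hF hF' (Nat.cast_ne_zero.mpr Fintype.card_ne_zero)
      (AddChar.IsPrimitive.of_ne_one hΘ) hχ1, hχneg, one_mul, hχ4]
end

section
/- Let q be an odd prime power. The number of points in ℙ³(F_q) on the surface x₀³x₁ + x₁³x₂ + x₂³x₃ + x₃⁴ = 27ψ x₀x₁x₂x₃ having at least one coordinate equal to zero is: 5q − 2 if q ≢ 1 (mod 3); and 7q − 4 if q ≡ 1 (mod 3) but q ≢ 1 (mod 9). (For q ≡ 1 (mod 9) there is an additional correction term expressed in Gauss sums.) -/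
/-!
On the coordinate hyperplanes the term `27ψx₀x₁x₂x₃` vanishes, so the count does not depend
on `ψ`. Counting the `q - 1` representatives of each point and splitting according to which of
`x₃, x₂, x₁` vanish gives `q² - 1`, `q(q - 1)`, `(q - 1)²`, `q(q - 1)N` and `(q - 1)W` vectors,
where `N` is the number of cube roots of `-1` and `W` the number of points `(u, w)` with `w ≠ 0`
on `w³u + u³ + 1 = 0`; hence there are `3q + qN + W` points.

The fibre of that curve over `u` is the set of cube roots of `τ(u) = -(u³ + 1)/u`, and
`τ(ζu) = ζ⁻¹τ(u)` for `ζ³ = 1`. Summing over the orbits of `u ↦ ζu` gives `W = q - 1 - N` as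
soon as, for every `t ≠ 0`, the elements `t, ζt, ζ²t` have three cube roots in total. If
`q ≢ 1 (mod 3)` cubing is bijective and `ζ = 1` works. If `q ≡ 1 (mod 3)` but `q ≢ 1 (mod 9)`,
take `ζ` primitive: the total is the number of solutions of `w⁹ = t³`, which is `3` because
`t³` is a ninth power and every ninth root of unity is a cube root of unity.
-/

/-- The defining polynomial of the `C4` pencil `x₀³x₁ + x₁³x₂ + x₂³x₃ + x₃⁴ - 27ψx₀x₁x₂x₃`. -/
def fC4 {F : Type} [Field F] (ψ : F) (x : Fin 4 → F) : F :=
  x 0 ^ 3 * x 1 + x 1 ^ 3 * x 2 + x 2 ^ 3 * x 3 + x 3 ^ 4 -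
    27 * ψ * (x 0 * x 1 * x 2 * x 3)

/-- The points of the `C4` pencil in `ℙ³(F_q)` having at least one zero coordinate. -/
def C4boundary (F : Type) [Field F] [Fintype F] (ψ : F) :
    Set (Projectivization F (Fin 4 → F)) :=
  {P | fC4 ψ P.rep = 0 ∧ ∃ j, P.rep j = 0}

open Finset Polynomial
open scoped LinearAlgebra.Projectivization

namespace Projectivization

variable {K V : Type*} [Field K] [AddCommGroup V] [Module K V]

theorem card_cone_eq_mul_card_units (p : V → Prop) (hp : ∀ (c : Kˣ) (v : V), p (c • v) ↔ p v) :
    Nat.card {v : V // v ≠ 0 ∧ p v} = Nat.card {x : ℙ K V // p x.rep} * Nat.card Kˣ := by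
  have hrep : ∀ v : {v : V // v ≠ 0}, p v ↔ p (mk K v.1 v.2).rep := fun v => by
    obtain ⟨a, ha⟩ := exists_smul_eq_mk_rep K v.1 v.2
    rw [← ha, hp]
  rw [← Nat.card_prod]
  exact Nat.card_congr <| (Equiv.subtypeSubtypeEquivSubtypeInter (· ≠ 0) p).symm.trans <|
    ((nonZeroEquivProjectivizationProdUnits K V).subtypeEquiv hrep).trans
      Equiv.prodSubtypeFstEquivSubtypeProd

end Projectivization

theorem IsPrimitiveRoot.pow_three_eq_pow_three_iff {R : Type*} [CommRing R] [IsDomain R]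
    {ζ : R} (hζ : IsPrimitiveRoot ζ 3) {x t : R} :
    x ^ 3 = t ^ 3 ↔ x = t ∨ x = ζ * t ∨ x = ζ ^ 2 * t := by
  have hsum : 1 + ζ + ζ ^ 2 = 0 := by
    simpa [sum_range_succ] using hζ.geom_sum_eq_zero (by norm_num)
  have hfac : x ^ 3 - t ^ 3 = (x - t) * ((x - ζ * t) * (x - ζ ^ 2 * t)) := by
    linear_combination (t * x ^ 2 - ζ * t ^ 2 * x) * hsum + t ^ 3 * hζ.pow_eq_one
  rw [← sub_eq_zero, hfac]
  simp only [mul_eq_zero, sub_eq_zero]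

theorem IsPrimitiveRoot.card_cube_roots_pow_three {R : Type*} [CommRing R] [IsDomain R]
    [Fintype R] [DecidableEq R] {ζ : R} (hζ : IsPrimitiveRoot ζ 3) {s : R} (hs : s ≠ 0) :
    #{w : R | w ^ 3 = s ^ 3} = 3 := by
  have hroots : ({w | w ^ 3 = s ^ 3} : Finset R) = (nthRoots 3 (s ^ 3)).toFinset := by
    ext w; simp [mem_nthRoots]
  rw [hroots, Multiset.toFinset_card_of_nodup (hζ.nthRoots_nodup (pow_ne_zero 3 hs)),
    hζ.card_nthRoots, if_pos ⟨s, rfl⟩]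

namespace FiniteField

variable {F : Type*} [Field F] [Fintype F]

theorem pow_eq_one_of_gcd_dvd {n m : ℕ} (hn : n ≠ 0) (h : n.gcd (Fintype.card F - 1) ∣ m)
    {w : F} (hw : w ^ n = 1) : w ^ m = 1 := by
  have hw0 : w ≠ 0 := by rintro rfl; simp [hn] at hw
  obtain ⟨k, rfl⟩ := h
  rw [pow_mul, pow_gcd_eq_one.mpr ⟨hw, pow_card_sub_one_eq_one w hw0⟩, one_pow]

theorem pow_injective_of_coprime {n : ℕ} (hn : n ≠ 0) (h : n.Coprime (Fintype.card F - 1)) :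
    Function.Injective (fun w : F => w ^ n) := by
  intro x y hxy
  simp only at hxy
  by_cases hy : y = 0
  · subst hy; simpa [hn] using hxy
  have hroot : (x / y) ^ n = 1 := by
    rw [div_pow, div_eq_one_iff_eq (pow_ne_zero n hy)]; exact hxy
  have := pow_eq_one_of_gcd_dvd hn (m := 1) (by rw [h]) hroot
  rwa [pow_one, div_eq_one_iff_eq hy] at this

theorem exists_isPrimitiveRoot_of_dvd (p : ℕ) [Fact p.Prime] (hp : p ∣ Fintype.card F - 1) :
    ∃ ζ : F, IsPrimitiveRoot ζ p := by
  classical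
  obtain ⟨u, hu⟩ := exists_prime_orderOf_dvd_card p (Fintype.card_units (α := F) ▸ hp)
  exact ⟨u, IsPrimitiveRoot.coe_units_iff.mpr (by rw [← hu]; exact IsPrimitiveRoot.orderOf u)⟩

theorem exists_pow_nine_eq_pow_three (h3 : Fintype.card F % 3 = 1)
    (h9 : Fintype.card F % 9 ≠ 1) (t : F) : ∃ s : F, s ^ 9 = t ^ 3 := by
  have ht := pow_card t
  obtain h4 | h7 : Fintype.card F % 9 = 4 ∨ Fintype.card F % 9 = 7 := by omega
  · refine ⟨t ^ (2 * (Fintype.card F / 9) + 1), ?_⟩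
    rw [← pow_mul, show (2 * (Fintype.card F / 9) + 1) * 9 = Fintype.card F + Fintype.card F + 1
      by omega, pow_add, pow_add, ht]
    ring
  · refine ⟨t ^ (Fintype.card F / 9 + 1), ?_⟩
    rw [← pow_mul, show (Fintype.card F / 9 + 1) * 9 = Fintype.card F + 2 by omega, pow_add, ht]
    ring

variable [DecidableEq F]

theorem card_cube_roots_eq_one (h3 : Fintype.card F % 3 ≠ 1) (t : F) :
    #{w : F | w ^ 3 = t} = 1 := by
  have hq := Fintype.one_lt_card (α := F)
  have hinj := pow_injective_of_coprime (F := F) three_ne_zero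
    ((Nat.Prime.coprime_iff_not_dvd Nat.prime_three).mpr (by omega))
  obtain ⟨s, rfl⟩ := Finite.surjective_of_injective hinj t
  rw [card_eq_one]
  exact ⟨s, by ext w; simpa using hinj.eq_iff⟩

theorem sum_card_cube_roots_pow_mul (h3 : Fintype.card F % 3 = 1) (h9 : Fintype.card F % 9 ≠ 1)
    {ζ : F} (hζ : IsPrimitiveRoot ζ 3) {t : F} (ht : t ≠ 0) :
    ∑ i ∈ range 3, #{w : F | w ^ 3 = ζ ^ i * t} = 3 := by
  obtain ⟨s, hs⟩ := exists_pow_nine_eq_pow_three h3 h9 t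
  have hs0 : s ≠ 0 := by
    rintro rfl; exact ht (pow_eq_zero_iff three_ne_zero |>.mp (by simp [← hs]))
  have hgcd : Nat.gcd 9 (Fintype.card F - 1) ∣ 3 := by
    have hq := Fintype.one_lt_card (α := F)
    have hr : ∀ r < 9, r ≠ 0 → Nat.gcd r 9 ∣ 3 := by decide
    rw [Nat.gcd_rec]
    exact hr _ (Nat.mod_lt _ (by norm_num)) (by omega)
  have hninth : ∀ w : F, w ^ 9 = s ^ 9 ↔ w ^ 3 = s ^ 3 := fun w => by
    refine ⟨fun h => ?_, fun h => by rw [show 9 = 3 * 3 by rfl, pow_mul, pow_mul, h]⟩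
    have := pow_eq_one_of_gcd_dvd (by norm_num) hgcd (w := w / s)
      (by rw [div_pow, h, div_self (pow_ne_zero _ hs0)])
    rwa [div_pow, div_eq_one_iff_eq (pow_ne_zero _ hs0)] at this
  have hunion : (range 3).biUnion (fun i => ({w | w ^ 3 = ζ ^ i * t} : Finset F)) =
      ({w | w ^ 3 = s ^ 3} : Finset F) := by
    ext w
    rw [mem_filter, ← hninth, hs, show w ^ 9 = (w ^ 3) ^ 3 by ring,
      hζ.pow_three_eq_pow_three_iff]
    simp [show range 3 = {0, 1, 2} by rfl]
  rw [← card_biUnion, hunion, hζ.card_cube_roots_pow_three hs0]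
  intro i hi j hj hij
  refine disjoint_filter.mpr fun w _ hwi hwj => hij ?_
  exact hζ.pow_inj (mem_range.mp hi) (mem_range.mp hj) (mul_right_cancel₀ ht (hwi.symm.trans hwj))

end FiniteField

section Curve

variable {F : Type*} [Field F] [Fintype F] [DecidableEq F]

variable (F) in
/-- The stratum `x₀ = 0`, `x₁x₂x₃ ≠ 0` of the boundary in the chart `x₃ = 1`, with
`(u, w) = (x₂, x₁)`. -/
def C4curve : Finset (F × F) := {p | p.2 ≠ 0 ∧ p.2 ^ 3 * p.1 + p.1 ^ 3 + 1 = 0}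

/-- This also holds at `u = 0`, where the fibre is empty and `-(0 ^ 3 + 1) / 0 = 0`. -/
theorem card_C4curve_eq_sum :
    #(C4curve F) = ∑ u : F, #{w : F | w ≠ 0 ∧ w ^ 3 = -(u ^ 3 + 1) / u} := by
  rw [C4curve, card_filter, Fintype.sum_prod_type]
  refine sum_congr rfl fun u _ => ?_
  rw [← card_filter]
  congr 1
  ext w
  by_cases hu : u = 0
  · simp [hu]
  · simp only [mem_filter, mem_univ, true_and, eq_div_iff hu]
    exact and_congr_right fun _ => by constructor <;> intro h <;> linear_combination h

theorem sum_card_cube_roots_eq_card {ζ : F} (hζ : ζ ^ 3 = 1)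
    (horbit : ∀ t ≠ 0, ∑ i ∈ range 3, #{w : F | w ^ 3 = ζ ^ i * t} = 3) :
    ∑ u : F, #{w : F | w ≠ 0 ∧ w ^ 3 = -(u ^ 3 + 1) / u} = #{u : F | ¬-(u ^ 3 + 1) / u = 0} := by
  set τ : F → F := fun u => -(u ^ 3 + 1) / u
  set h : F → ℕ := fun t => #{w : F | w ≠ 0 ∧ w ^ 3 = t}
  change ∑ u, h (τ u) = #{u : F | ¬τ u = 0}
  have hτ : ∀ c u : F, c ^ 3 = 1 → τ (c⁻¹ * u) = c * τ u := by
    intro c u hc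
    simp only [τ]
    rw [mul_pow, inv_pow, hc, inv_one, one_mul, div_mul_eq_div_div, div_inv_eq_mul, mul_div_assoc']
    ring
  have hrotate : ∀ i, ∑ u, h (ζ ^ i * τ u) = ∑ u, h (τ u) := fun i => by
    have hζi : (ζ ^ i) ^ 3 = 1 := by rw [← pow_mul, mul_comm, pow_mul, hζ, one_pow]
    have hζi0 : (ζ ^ i)⁻¹ ≠ 0 := inv_ne_zero (by rintro h0; simp [h0] at hζi)
    simp_rw [← hτ _ _ hζi]
    exact Fintype.sum_equiv (Equiv.mulLeft₀ _ hζi0) _ _ fun u => rfl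
  have hpoint : ∀ t, ∑ i ∈ range 3, h (ζ ^ i * t) = if t = 0 then 0 else 3 := by
    intro t
    split_ifs with ht
    · simp [h, ht]
    · refine (sum_congr rfl fun i _ => congrArg card (filter_congr fun w _ => ?_)).trans
        (horbit t ht)
      have : ζ ^ i * t ≠ 0 := mul_ne_zero (pow_ne_zero _ (by rintro rfl; simp at hζ)) ht
      exact ⟨fun hw => hw.2, fun hw => ⟨by rintro rfl; simp_all, hw⟩⟩
  have : 3 * ∑ u, h (τ u) = 3 * #{u : F | ¬τ u = 0} := calc
    3 * ∑ u, h (τ u) = ∑ i ∈ range 3, ∑ u, h (ζ ^ i * τ u) := by simp [hrotate]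
    _ = ∑ u, ∑ i ∈ range 3, h (ζ ^ i * τ u) := sum_comm
    _ = 3 * #{u : F | ¬τ u = 0} := by simp [hpoint, sum_ite, mul_comm]
  omega

theorem card_div_ne_zero_add_card_cube_roots_neg_one :
    #{u : F | ¬-(u ^ 3 + 1) / u = 0} + #{u : F | u ^ 3 = -1} = Fintype.card F - 1 := by
  have hzero : ({u | -(u ^ 3 + 1) / u = 0} : Finset F) =
      insert 0 ({u | u ^ 3 = -1} : Finset F) := by
    ext u
    simp only [mem_filter, mem_univ, true_and, mem_insert, div_eq_zero_iff, neg_eq_zero,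
      add_eq_zero_iff_eq_neg]
    tauto
  have h0 : (0 : F) ∉ ({u | u ^ 3 = -1} : Finset F) := by simp
  have := card_filter_add_card_filter_not (s := (univ : Finset F)) fun u => -(u ^ 3 + 1) / u = 0
  rw [hzero, card_insert_of_notMem h0, card_univ] at this
  omega

theorem card_C4curve_add_card_cube_roots_neg_one {ζ : F} (hζ : ζ ^ 3 = 1)
    (horbit : ∀ t ≠ 0, ∑ i ∈ range 3, #{w : F | w ^ 3 = ζ ^ i * t} = 3) :
    #(C4curve F) + #{u : F | u ^ 3 = -1} = Fintype.card F - 1 := by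
  rw [card_C4curve_eq_sum, sum_card_cube_roots_eq_card hζ horbit,
    card_div_ne_zero_add_card_cube_roots_neg_one]

end Curve

theorem card_filter_ne_zero {α : Type*} [Fintype α] [Zero α] [DecidableEq α] :
    #({x | x ≠ 0} : Finset α) = Fintype.card α - 1 := by
  rw [filter_ne', card_erase_of_mem (mem_univ _), card_univ]

section Boundary

variable {F : Type*} [Field F] [Fintype F] [DecidableEq F]

variable (F) in
def C4boundaryCone : Finset (Fin 4 → F) :=
  {v | v ≠ 0 ∧ v 0 ^ 3 * v 1 + v 1 ^ 3 * v 2 + v 2 ^ 3 * v 3 + v 3 ^ 4 = 0 ∧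
    v 0 * v 1 * v 2 * v 3 = 0}

theorem mem_C4boundaryCone {v : Fin 4 → F} : v ∈ C4boundaryCone F ↔ v ≠ 0 ∧
    v 0 ^ 3 * v 1 + v 1 ^ 3 * v 2 + v 2 ^ 3 * v 3 + v 3 ^ 4 = 0 ∧ v 0 * v 1 * v 2 * v 3 = 0 := by
  simp [C4boundaryCone]

theorem card_filter_C4boundaryCone_x3_eq_zero_x1_eq_zero :
    #{v ∈ C4boundaryCone F | v 3 = 0 ∧ v 1 = 0} = Fintype.card F * Fintype.card F - 1 := by
  rw [← Fintype.card_prod, ← card_filter_ne_zero]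
  refine card_nbij' (fun v => (v 0, v 2)) (fun p => ![p.1, 0, p.2, 0])
    (fun v hv => ?_) (fun p hp => ?_) (fun v hv => ?_) (fun p _ => rfl)
  all_goals simp only [mem_coe, mem_filter, mem_univ, true_and, mem_C4boundaryCone] at *
  · obtain ⟨⟨hv0, -, -⟩, h3, h1⟩ := hv
    intro h
    simp only [Prod.mk_eq_zero] at h
    exact hv0 (funext fun k => by fin_cases k <;> simp_all)
  · refine ⟨⟨?_, by simp, by simp⟩, rfl, rfl⟩
    simpa [funext_iff, Fin.forall_fin_succ, Prod.ext_iff] using hp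
  · ext k; fin_cases k <;> simp [hv.2.1, hv.2.2]

theorem card_filter_C4boundaryCone_x3_eq_zero_x1_ne_zero :
    #{v ∈ C4boundaryCone F | v 3 = 0 ∧ v 1 ≠ 0} = Fintype.card F * (Fintype.card F - 1) := by
  rw [← card_filter_ne_zero, ← card_univ, ← card_product]
  refine card_nbij' (fun v => (v 0, v 1)) (fun p => ![p.1, p.2, -p.1 ^ 3 / p.2 ^ 2, 0])
    (fun v hv => ?_) (fun p hp => ?_) (fun v hv => ?_) (fun p _ => rfl)
  all_goals simp only [mem_coe, mem_filter, mem_univ, true_and, mem_C4boundaryCone,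
    mem_product] at *
  · exact hv.2.2
  · have key : p.1 ^ 3 * p.2 + p.2 ^ 3 * (-p.1 ^ 3 / p.2 ^ 2) = 0 := by field_simp; ring
    exact ⟨⟨fun h => hp (by simpa using congrFun h 1), by simpa using key, by simp⟩, rfl, hp⟩
  · obtain ⟨⟨-, heq, -⟩, h3, h1⟩ := hv
    rw [h3] at heq
    have h2 : -v 0 ^ 3 / v 1 ^ 2 = v 2 := by
      rw [div_eq_iff (pow_ne_zero 2 h1)]
      exact mul_right_cancel₀ h1 (by linear_combination -heq)
    ext k; fin_cases k <;> simp [h3, h2]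

theorem card_filter_C4boundaryCone_x3_ne_zero_x2_eq_zero :
    #{v ∈ C4boundaryCone F | v 3 ≠ 0 ∧ v 2 = 0} =
      (Fintype.card F - 1) * (Fintype.card F - 1) := by
  rw [← card_filter_ne_zero, ← card_product]
  refine card_nbij' (fun v => (v 0, v 3)) (fun p => ![p.1, -p.2 ^ 4 / p.1 ^ 3, 0, p.2])
    (fun v hv => ?_) (fun p hp => ?_) (fun v hv => ?_) (fun p _ => rfl)
  all_goals simp only [mem_coe, mem_filter, mem_univ, true_and, mem_C4boundaryCone,
    mem_product] at *
  · obtain ⟨⟨-, heq, -⟩, h3, h2⟩ := hv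
    exact ⟨fun h0 => h3 (by simpa [h0, h2] using heq), h3⟩
  · obtain ⟨ha, hd⟩ := hp
    have key : p.1 ^ 3 * (-p.2 ^ 4 / p.1 ^ 3) + p.2 ^ 4 = 0 := by field_simp; ring
    exact ⟨⟨fun h => hd (by simpa using congrFun h 3), by simpa using key, by simp⟩, hd, rfl⟩
  · obtain ⟨⟨-, heq, -⟩, h3, h2⟩ := hv
    rw [h2] at heq
    have h0 : v 0 ≠ 0 := fun h0 => h3 (by simpa [h0] using heq)
    have h1 : -v 3 ^ 4 / v 0 ^ 3 = v 1 := by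
      rw [div_eq_iff (pow_ne_zero 3 h0)]
      linear_combination -heq
    ext k; fin_cases k <;> simp [h2, h1]

theorem card_filter_C4boundaryCone_x3_ne_zero_x2_ne_zero_x1_eq_zero :
    #{v ∈ C4boundaryCone F | v 3 ≠ 0 ∧ v 2 ≠ 0 ∧ v 1 = 0} =
      Fintype.card F * ((Fintype.card F - 1) * #{z : F | z ^ 3 = -1}) := by
  rw [← card_filter_ne_zero, ← card_univ, ← card_product, ← card_product]
  refine card_nbij' (fun v => (v 0, v 3, v 2 / v 3)) (fun p => ![p.1, 0, p.2.2 * p.2.1, p.2.1])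
    (fun v hv => ?_) (fun p hp => ?_) (fun v hv => ?_) (fun p hp => ?_)
  all_goals simp only [mem_coe, mem_filter, mem_univ, true_and, mem_C4boundaryCone,
    mem_product] at *
  · obtain ⟨⟨-, heq, -⟩, h3, h2, h1⟩ := hv
    rw [h1] at heq
    refine ⟨h3, ?_⟩
    rw [div_pow, div_eq_iff (pow_ne_zero 3 h3)]
    exact mul_right_cancel₀ h3 (by linear_combination heq)
  · obtain ⟨hd, hz⟩ := hp
    have hz0 : p.2.2 ≠ 0 := by rintro h; simp [h] at hz
    have key : (p.2.2 * p.2.1) ^ 3 * p.2.1 + p.2.1 ^ 4 = 0 := by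
      linear_combination p.2.1 ^ 4 * hz
    exact ⟨⟨fun h => hd (by simpa using congrFun h 3), by simpa using key, by simp⟩, hd,
      mul_ne_zero hz0 hd, rfl⟩
  · obtain ⟨-, h3, -, h1⟩ := hv
    ext k; fin_cases k <;> simp [h1, div_mul_cancel₀ _ h3]
  · simp [hp.1]

theorem card_filter_C4boundaryCone_x3_ne_zero_x2_ne_zero_x1_ne_zero :
    #{v ∈ C4boundaryCone F | v 3 ≠ 0 ∧ v 2 ≠ 0 ∧ v 1 ≠ 0} =
      (Fintype.card F - 1) * #(C4curve F) := by
  rw [← card_filter_ne_zero, ← card_product]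
  refine card_nbij' (fun v => (v 3, v 2 / v 3, v 1 / v 3))
    (fun p => ![0, p.2.2 * p.1, p.2.1 * p.1, p.1])
    (fun v hv => ?_) (fun p hp => ?_) (fun v hv => ?_) (fun p hp => ?_)
  all_goals simp only [mem_coe, mem_filter, mem_univ, true_and, mem_C4boundaryCone,
    mem_product, C4curve] at *
  · obtain ⟨⟨-, heq, hprod⟩, h3, h2, h1⟩ := hv
    have h0 : v 0 = 0 := by simpa [h1, h2, h3] using hprod
    rw [h0] at heq
    refine ⟨h3, div_ne_zero h1 h3, ?_⟩
    field_simp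
    linear_combination heq
  · obtain ⟨hd, hw, heq⟩ := hp
    have hu : p.2.1 ≠ 0 := by rintro h; simp [h] at heq
    have key : (p.2.2 * p.1) ^ 3 * (p.2.1 * p.1) + (p.2.1 * p.1) ^ 3 * p.1 + p.1 ^ 4 = 0 := by
      linear_combination p.1 ^ 4 * heq
    exact ⟨⟨fun h => hd (by simpa using congrFun h 3), by simpa using key, by simp⟩, hd,
      mul_ne_zero hu hd, mul_ne_zero hw hd⟩
  · obtain ⟨⟨-, -, hprod⟩, h3, h2, h1⟩ := hv
    have h0 : v 0 = 0 := by simpa [h1, h2, h3] using hprod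
    ext k; fin_cases k <;> simp [h0, div_mul_cancel₀ _ h3]
  · simp [hp.1]

theorem card_C4boundaryCone :
    #(C4boundaryCone F) = (Fintype.card F - 1) *
      (3 * Fintype.card F + Fintype.card F * #{z : F | z ^ 3 = -1} + #(C4curve F)) := by
  have split : ∀ (s : Finset (Fin 4 → F)) (p : (Fin 4 → F) → Prop) [DecidablePred p],
      #s = #{v ∈ s | p v} + #{v ∈ s | ¬p v} := fun s p _ =>
    (card_filter_add_card_filter_not p).symm
  rw [split _ (· 3 = 0), split {v ∈ _ | v 3 = 0} (· 1 = 0), split {v ∈ _ | ¬v 3 = 0} (· 2 = 0),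
    split {v ∈ {v ∈ _ | ¬v 3 = 0} | ¬v 2 = 0} (· 1 = 0)]
  simp only [filter_filter, and_assoc, ← ne_eq]
  rw [card_filter_C4boundaryCone_x3_eq_zero_x1_eq_zero,
    card_filter_C4boundaryCone_x3_eq_zero_x1_ne_zero,
    card_filter_C4boundaryCone_x3_ne_zero_x2_eq_zero,
    card_filter_C4boundaryCone_x3_ne_zero_x2_ne_zero_x1_eq_zero,
    card_filter_C4boundaryCone_x3_ne_zero_x2_ne_zero_x1_ne_zero]
  have hq : 1 ≤ Fintype.card F := Fintype.card_pos
  have hq2 : 1 ≤ Fintype.card F * Fintype.card F := Nat.one_le_iff_ne_zero.mpr (by positivity)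
  zify [hq, hq2]
  ring

end Boundary

theorem fC4_smul {F : Type} [Field F] (ψ c : F) (v : Fin 4 → F) :
    fC4 ψ (c • v) = c ^ 4 * fC4 ψ v := by
  simp only [fC4, Pi.smul_apply, smul_eq_mul]
  ring

theorem filter_fC4_eq_C4boundaryCone {F : Type} [Field F] [Fintype F] [DecidableEq F] (ψ : F) :
    ({v | v ≠ 0 ∧ fC4 ψ v = 0 ∧ ∃ j, v j = 0} : Finset (Fin 4 → F)) = C4boundaryCone F := by
  ext v
  have hprod : (∃ j, v j = 0) ↔ v 0 * v 1 * v 2 * v 3 = 0 := by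
    simp [Fin.exists_fin_succ, or_assoc]
  rw [mem_filter, mem_C4boundaryCone, hprod]
  simp only [mem_univ, true_and, fC4]
  refine and_congr_right fun _ => ⟨fun ⟨hf, hp⟩ => ⟨?_, hp⟩, fun ⟨hf, hp⟩ => ⟨?_, hp⟩⟩
  · linear_combination hf + 27 * ψ * hp
  · linear_combination hf - 27 * ψ * hp

theorem card_C4boundary {F : Type} [Field F] [Fintype F] [DecidableEq F] (ψ : F) :
    Nat.card (C4boundary F ψ) = 3 * Fintype.card F +
      Fintype.card F * #{z : F | z ^ 3 = -1} + #(C4curve F) := by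
  have hcone := Projectivization.card_cone_eq_mul_card_units (K := F)
    (fun v : Fin 4 → F => fC4 ψ v = 0 ∧ ∃ j, v j = 0)
    fun c v => by simp [Units.smul_def, fC4_smul, c.ne_zero]
  rw [Nat.card_eq_fintype_card (α := {v : Fin 4 → F // _}), Fintype.card_subtype,
    filter_fC4_eq_C4boundaryCone, card_C4boundaryCone, Nat.card_units,
    Nat.card_eq_fintype_card (α := F), mul_comm] at hcone
  exact (Nat.eq_of_mul_eq_mul_right (by have := Fintype.one_lt_card (α := F); omega) hcone).symm

theorem C4_boundary_count_general (F : Type) [Field F] [Fintype F]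
    (ψ : F) :
    (Fintype.card F % 3 ≠ 1 →
      Nat.card (C4boundary F ψ) = 5 * Fintype.card F - 2) ∧
    (Fintype.card F % 3 = 1 → Fintype.card F % 9 ≠ 1 →
      Nat.card (C4boundary F ψ) = 7 * Fintype.card F - 4) := by
  classical
  have hq := Fintype.one_lt_card (α := F)
  rw [card_C4boundary]
  refine ⟨fun h3 => ?_, fun h3 h9 => ?_⟩
  · have hW := card_C4curve_add_card_cube_roots_neg_one (one_pow (M := F) 3) fun t _ => by
      simp [FiniteField.card_cube_roots_eq_one h3]
    rw [FiniteField.card_cube_roots_eq_one h3] at hW ⊢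
    omega
  · obtain ⟨ζ, hζ⟩ := FiniteField.exists_isPrimitiveRoot_of_dvd (F := F) 3 (by omega)
    have hN : #{z : F | z ^ 3 = -1} = 3 := by
      have := hζ.card_cube_roots_pow_three (neg_ne_zero.mpr (one_ne_zero (α := F)))
      rwa [show (-1 : F) ^ 3 = -1 by norm_num] at this
    have hW := card_C4curve_add_card_cube_roots_neg_one hζ.pow_eq_one fun t ht =>
      FiniteField.sum_card_cube_roots_pow_mul h3 h9 hζ ht
    rw [hN] at hW ⊢
    omega

/-- The number of points on the `C4` pencil in `ℙ³(F_q)` with at least one zero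
coordinate is `5q - 2` if `q ≢ 1 (mod 3)`, and `7q - 4` if `q ≡ 1 (mod 3)` but
`q ≢ 1 (mod 9)`. -/
theorem C4_boundary_count (F : Type) [Field F] [Fintype F]
    (hodd : Odd (Fintype.card F)) (ψ : F) :
    (Fintype.card F % 3 ≠ 1 →
      Nat.card (C4boundary F ψ) = 5 * Fintype.card F - 2) ∧
    (Fintype.card F % 3 = 1 → Fintype.card F % 9 ≠ 1 →
      Nat.card (C4boundary F ψ) = 7 * Fintype.card F - 4) :=
  C4_boundary_count_general F ψ
end

section
/- Let q be an odd prime power with q ≡ 1 (mod 4). The solution set of the system Σᵢ v_{ij} sᵢ ≡ 0 (mod q−1) for all j = 0,…,3 and Σᵢ sᵢ ≡ 0 (mod q−1), where v_{ij} are the exponents of the five monomials x₀³x₁, x₁⁴, x₂⁴, x₃⁴, x₀x₁x₂x₃ of the C2F2 pencil, is the disjoint union S₀ ∪ S₁ ∪ S₂ ∪ S₃, where S₀ = {(4,2,3,3,−12)l}, S₁ = {(4,2,3,3,−12)l + ((q−1)/2)(0,1,0,1,0)}, S₂ = {(4,2,3,3,−12)l + ((q−1)/4)(0,3,0,1,0)},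 S₃ = {(4,2,3,3,−12)l + ((q−1)/4)(0,1,0,3,0)}, with l ranging over ℤ/(q−1)ℤ. If instead q ≡ 3 (mod 4), the solution set is the disjoint union S₀ ∪ S₁. -/
/-- The exponent matrix of the five monomials `x₀³x₁, x₁⁴, x₂⁴, x₃⁴, x₀x₁x₂x₃`
of the `C2F2` pencil. -/
def VC2F2 : Fin 5 → Fin 4 → ℕ :=
  ![![3, 1, 0, 0], ![0, 4, 0, 0], ![0, 0, 4, 0], ![0, 0, 0, 4], ![1, 1, 1, 1]]

lemma castval {n : ℕ} [NeZero n] (a : ZMod n) : ((a.val : ℕ) : ZMod n) = a := by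
  rw [ZMod.natCast_val, ZMod.cast_id]

lemma cast_inj_of_lt {n x y : ℕ} (hx : x < n) (hy : y < n) (h : (x : ZMod n) = (y : ZMod n)) :
    x = y := by
  haveI : NeZero n := ⟨by omega⟩
  have := congrArg ZMod.val h
  rwa [ZMod.val_cast_of_lt hx, ZMod.val_cast_of_lt hy] at this

lemma ker4_cases {n : ℕ} (hn : 2 ≤ n) {a : ZMod n} (h : 4 * a = 0) :
    ∃ v : ℕ, ∃ k : ℕ, v < n ∧ a = (v : ZMod n) ∧ 4 * v = n * k ∧ k < 4 := by
  haveI : NeZero n := ⟨by omega⟩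
  have hv : ((4 * a.val : ℕ) : ZMod n) = 0 := by push_cast [castval]; exact h
  rw [ZMod.natCast_eq_zero_iff] at hv
  obtain ⟨k, hk⟩ := hv
  refine ⟨a.val, k, ZMod.val_lt a, (castval a).symm, hk, ?_⟩
  have h1 := ZMod.val_lt a
  by_contra hc
  have : n * 4 ≤ n * k := Nat.mul_le_mul_left n (by omega)
  omega

lemma coset_disj {n : ℕ} {A B : Set (Fin 5 → ZMod n)} (xa xb : ℕ)
    (hxa : xa < n) (hxb : xb < n) (hne : xa ≠ xb)
    (hA : ∀ s ∈ A, ∃ l : ZMod n, s 0 = l * 4 ∧ s 1 = l * 2 + (xa : ZMod n) ∧ s 2 = l * 3)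
    (hB : ∀ s ∈ B, ∃ l : ZMod n, s 0 = l * 4 ∧ s 1 = l * 2 + (xb : ZMod n) ∧ s 2 = l * 3) :
    Disjoint A B := by
  rw [Set.disjoint_left]
  intro s hsa hsb
  obtain ⟨l, a0, a1, a2⟩ := hA s hsa
  obtain ⟨l', b0, b1, b2⟩ := hB s hsb
  have hll : l = l' := by linear_combination b0 - a0 - b2 + a2
  have hx : (xa : ZMod n) = (xb : ZMod n) := by
    subst hll; linear_combination b1 - a1
  exact hne (cast_inj_of_lt hxa hxb hx)


/-- The solution set of the Koblitz character system for the `C2F2` pencil: if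
`q ≡ 1 (mod 4)` it is the disjoint union of the four cosets `S₀, S₁, S₂, S₃` of the
cyclic module generated by `(4,2,3,3,-12)`; if `q ≡ 3 (mod 4)` it is the disjoint
union `S₀ ∪ S₁`. -/
theorem C2F2_character_solutions (q : ℕ) (hq : IsPrimePow q) (hodd : Odd q) :
    let n := q - 1
    let sol : Set (Fin 5 → ZMod n) :=
      {s | (∀ j : Fin 4, ∑ i, (VC2F2 i j : ZMod n) * s i = 0) ∧ ∑ i, s i = 0}
    let w : Fin 5 → ZMod n := ![4, 2, 3, 3, -12]
    let S : Fin 4 → Set (Fin 5 → ZMod n) :=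
      ![{s | ∃ l : ZMod n, s = fun i => l * w i},
        {s | ∃ l : ZMod n, s = fun i =>
          l * w i + ((n / 2 : ℕ) : ZMod n) * (![0, 1, 0, 1, 0] : Fin 5 → ZMod n) i},
        {s | ∃ l : ZMod n, s = fun i =>
          l * w i + ((n / 4 : ℕ) : ZMod n) * (![0, 3, 0, 1, 0] : Fin 5 → ZMod n) i},
        {s | ∃ l : ZMod n, s = fun i =>
          l * w i + ((n / 4 : ℕ) : ZMod n) * (![0, 1, 0, 3, 0] : Fin 5 → ZMod n) i}]
    (q % 4 = 1 →
      sol = S 0 ∪ S 1 ∪ S 2 ∪ S 3 ∧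
        ∀ a b : Fin 4, a ≠ b → Disjoint (S a) (S b)) ∧
    (q % 4 = 3 →
      sol = S 0 ∪ S 1 ∧ Disjoint (S 0) (S 1)) := by
  intro n sol w S
  have hq3 : 3 ≤ q := by
    have h2 := hq.two_le
    rcases hodd with ⟨m, hm⟩
    omega
  have hqodd : q % 2 = 1 := by rcases hodd with ⟨m, hm⟩; omega
  have hn : n = q - 1 := rfl
  have hn2 : 2 ≤ n := by omega
  have hneven : n % 2 = 0 := by omega
  haveI : NeZero n := ⟨by omega⟩
  have hnself : ((n : ℕ) : ZMod n) = 0 := ZMod.natCast_self n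
  have hc2 : ((n / 2 : ℕ) : ZMod n) * 2 = 0 := by
    have h : ((n / 2 * 2 : ℕ) : ZMod n) = 0 := by
      rw [show n / 2 * 2 = n from by omega]; exact hnself
    push_cast at h; linear_combination h
  -- every element of the explicit vector form is a solution
  have mem_sol : ∀ l t : ZMod n, 4 * t = 0 →
      (![l*4, l*2+t, l*3, l*3-t, l*(-12)] : Fin 5 → ZMod n) ∈ sol := by
    intro l t ht
    constructor
    · intro j
      fin_cases j <;>
        simp [VC2F2, Fin.sum_univ_five] <;>
        [skip; linear_combination ht; skip; linear_combination -ht] <;> ring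
    · rw [Fin.sum_univ_five]; simp; ring
  -- every solution has the explicit vector form
  have key : ∀ s ∈ sol, ∃ l t : ZMod n, 4 * t = 0 ∧ s 0 = l*4 ∧ s 1 = l*2 + t ∧
      s 2 = l*3 ∧ s 3 = l*3 - t ∧ s 4 = l*(-12) := by
    intro s hs
    simp only [sol, Set.mem_setOf_eq] at hs
    obtain ⟨hj, hsum⟩ := hs
    have e0 := hj 0; have e1 := hj 1; have e2 := hj 2; have e3 := hj 3
    simp [VC2F2, Fin.sum_univ_five] at e0 e1 e2 e3
    rw [Fin.sum_univ_five] at hsum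
    refine ⟨3 * s 2 - 4 * s 1, 9 * s 1 - 6 * s 2, ?_, ?_, ?_, ?_, ?_, ?_⟩
    · linear_combination (-3 : ZMod n)*e0 + 9*e1 - 6*e2
    · linear_combination (-1 : ZMod n)*e0 + 4*e1 - 3*e2
    · ring
    · linear_combination (-1 : ZMod n)*e0 + 3*e1 - 2*e2
    · linear_combination hsum - 2*e0 + 5*e1 - 4*e2
    · linear_combination (4 : ZMod n)*e0 - 12*e1 + 9*e2
  -- shape of the cosets (first three coordinates)
  have shape0 : ∀ s ∈ S 0, ∃ l : ZMod n,
      s 0 = l * 4 ∧ s 1 = l * 2 + ((0 : ℕ) : ZMod n) ∧ s 2 = l * 3 := by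
    intro s hs
    simp only [S, Matrix.cons_val_zero, Set.mem_setOf_eq] at hs
    obtain ⟨l, rfl⟩ := hs
    exact ⟨l, by simp [w], by simp [w], by simp [w]⟩
  have shape1 : ∀ s ∈ S 1, ∃ l : ZMod n,
      s 0 = l * 4 ∧ s 1 = l * 2 + ((n / 2 : ℕ) : ZMod n) ∧ s 2 = l * 3 := by
    intro s hs
    simp only [S, Matrix.cons_val_one, Matrix.head_cons, Set.mem_setOf_eq] at hs
    obtain ⟨l, rfl⟩ := hs
    exact ⟨l, by simp [w], by simp [w], by simp [w]⟩
  have shape2 : ∀ s ∈ S 2, ∃ l : ZMod n,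
      s 0 = l * 4 ∧ s 1 = l * 2 + ((3 * (n / 4) : ℕ) : ZMod n) ∧ s 2 = l * 3 := by
    intro s hs
    simp only [S, Matrix.cons_val_two, Matrix.tail_cons, Matrix.head_cons,
      Set.mem_setOf_eq] at hs
    obtain ⟨l, rfl⟩ := hs
    refine ⟨l, by simp [w], ?_, by simp [w]⟩
    simp [w]; push_cast; ring
  have shape3 : ∀ s ∈ S 3, ∃ l : ZMod n,
      s 0 = l * 4 ∧ s 1 = l * 2 + ((n / 4 : ℕ) : ZMod n) ∧ s 2 = l * 3 := by
    intro s hs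
    simp only [S, Matrix.cons_val_three, Matrix.tail_cons, Matrix.head_cons,
      Set.mem_setOf_eq] at hs
    obtain ⟨l, rfl⟩ := hs
    exact ⟨l, by simp [w], by simp [w], by simp [w]⟩
  constructor
  · -- q ≡ 1 (mod 4)
    intro hq1
    have hn4 : n % 4 = 0 := by omega
    have hn4' : 4 ≤ n := by omega
    have hc4 : ((n / 4 : ℕ) : ZMod n) * 4 = 0 := by
      have h : ((n / 4 * 4 : ℕ) : ZMod n) = 0 := by
        rw [show n / 4 * 4 = n from by omega]; exact hnself
      push_cast at h; linear_combination h
    constructor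
    · ext s
      simp only [S, Set.mem_union, Set.mem_setOf_eq, Matrix.cons_val_zero,
        Matrix.cons_val_one, Matrix.head_cons, Matrix.cons_val_two, Matrix.tail_cons,
        Matrix.cons_val_three]
      constructor
      · intro hs
        obtain ⟨l, t, ht, k0, k1, k2, k3, k4⟩ := key s hs
        have hs' : s = (![l*4, l*2+t, l*3, l*3-t, l*(-12)] : Fin 5 → ZMod n) := by
          funext i; fin_cases i <;> assumption
        subst hs'
        obtain ⟨v, k, hvlt, hveq, hvk, hk4⟩ := ker4_cases hn2 ht
        interval_cases k
        · -- t = 0 : S₀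
          have ht0 : t = 0 := by
            rw [hveq, show v = 0 from by omega]; exact Nat.cast_zero
          refine Or.inl (Or.inl (Or.inl ⟨l, ?_⟩))
          funext i; fin_cases i <;> simp [w] <;>
            first
              | rfl
              | linear_combination ht0
              | linear_combination -ht0
        · -- t = n/4 : S₃
          have ht' : t = ((n / 4 : ℕ) : ZMod n) := by
            rw [hveq, show v = n / 4 from by omega]
          refine Or.inr ⟨l, ?_⟩
          funext i; fin_cases i <;> simp [w] <;>
            first
              | rfl
              | linear_combination ht'
              | linear_combination -ht' - hc4
        · -- t = n/2 : S₁
          have ht' : t = ((n / 2 : ℕ) : ZMod n) := by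
            rw [hveq, show v = n / 2 from by omega]
          refine Or.inl (Or.inl (Or.inr ⟨l, ?_⟩))
          funext i; fin_cases i <;> simp [w] <;>
            first
              | rfl
              | linear_combination ht'
              | linear_combination -ht' - hc2
        · -- t = 3(n/4) : S₂
          have ht' : t = 3 * ((n / 4 : ℕ) : ZMod n) := by
            rw [hveq, show v = 3 * (n / 4) from by omega]; push_cast; ring
          refine Or.inl (Or.inr ⟨l, ?_⟩)
          funext i; fin_cases i <;> simp [w] <;>
            first
              | rfl
              | linear_combination ht'
              | linear_combination -ht' - hc4
      · intro hs
        rcases hs with ((⟨l, rfl⟩ | ⟨l, rfl⟩) | ⟨l, rfl⟩) | ⟨l, rfl⟩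
        · have hv : (fun i => l * w i) =
              (![l*4, l*2+0, l*3, l*3-0, l*(-12)] : Fin 5 → ZMod n) := by
            funext i; fin_cases i <;> simp [w]
          rw [hv]; exact mem_sol l 0 (by ring)
        · have hv : (fun i => l * w i +
              ((n / 2 : ℕ) : ZMod n) * (![0, 1, 0, 1, 0] : Fin 5 → ZMod n) i) =
              (![l*4, l*2+((n / 2 : ℕ) : ZMod n), l*3, l*3-((n / 2 : ℕ) : ZMod n),
                l*(-12)] : Fin 5 → ZMod n) := by
            funext i; fin_cases i <;> simp [w] <;>
              first | rfl | linear_combination hc2 | linear_combination -hc2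
          rw [hv]; exact mem_sol l _ (by linear_combination 2*hc2)
        · have hv : (fun i => l * w i +
              ((n / 4 : ℕ) : ZMod n) * (![0, 3, 0, 1, 0] : Fin 5 → ZMod n) i) =
              (![l*4, l*2+3*((n / 4 : ℕ) : ZMod n), l*3, l*3-3*((n / 4 : ℕ) : ZMod n),
                l*(-12)] : Fin 5 → ZMod n) := by
            funext i; fin_cases i <;> simp [w] <;>
              first | rfl | ring1 | linear_combination hc4 | linear_combination -hc4
          rw [hv]; exact mem_sol l _ (by linear_combination 3*hc4)
        · have hv : (fun i => l * w i +
              ((n / 4 : ℕ) : ZMod n) * (![0, 1, 0, 3, 0] : Fin 5 → ZMod n) i) =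
              (![l*4, l*2+((n / 4 : ℕ) : ZMod n), l*3, l*3-((n / 4 : ℕ) : ZMod n),
                l*(-12)] : Fin 5 → ZMod n) := by
            funext i; fin_cases i <;> simp [w] <;>
              first | rfl | ring1 | linear_combination hc4 | linear_combination -hc4
          rw [hv]; exact mem_sol l _ (by linear_combination hc4)
    · intro a b hab
      fin_cases a <;> fin_cases b
      · exact absurd rfl hab
      · exact coset_disj 0 (n/2) (by omega) (by omega) (by omega) shape0 shape1
      · exact coset_disj 0 (3*(n/4)) (by omega) (by omega) (by omega) shape0 shape2
      · exact coset_disj 0 (n/4) (by omega) (by omega) (by omega) shape0 shape3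
      · exact coset_disj (n/2) 0 (by omega) (by omega) (by omega) shape1 shape0
      · exact absurd rfl hab
      · exact coset_disj (n/2) (3*(n/4)) (by omega) (by omega) (by omega) shape1 shape2
      · exact coset_disj (n/2) (n/4) (by omega) (by omega) (by omega) shape1 shape3
      · exact coset_disj (3*(n/4)) 0 (by omega) (by omega) (by omega) shape2 shape0
      · exact coset_disj (3*(n/4)) (n/2) (by omega) (by omega) (by omega) shape2 shape1
      · exact absurd rfl hab
      · exact coset_disj (3*(n/4)) (n/4) (by omega) (by omega) (by omega) shape2 shape3
      · exact coset_disj (n/4) 0 (by omega) (by omega) (by omega) shape3 shape0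
      · exact coset_disj (n/4) (n/2) (by omega) (by omega) (by omega) shape3 shape1
      · exact coset_disj (n/4) (3*(n/4)) (by omega) (by omega) (by omega) shape3 shape2
      · exact absurd rfl hab
  · -- q ≡ 3 (mod 4)
    intro hq1
    have hn42 : n % 4 = 2 := by omega
    constructor
    · ext s
      simp only [S, Set.mem_union, Set.mem_setOf_eq, Matrix.cons_val_zero,
        Matrix.cons_val_one, Matrix.head_cons]
      constructor
      · intro hs
        obtain ⟨l, t, ht, k0, k1, k2, k3, k4⟩ := key s hs
        have hs' : s = (![l*4, l*2+t, l*3, l*3-t, l*(-12)] : Fin 5 → ZMod n) := by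
          funext i; fin_cases i <;> assumption
        subst hs'
        obtain ⟨v, k, hvlt, hveq, hvk, hk4⟩ := ker4_cases hn2 ht
        interval_cases k
        · have ht0 : t = 0 := by
            rw [hveq, show v = 0 from by omega]; exact Nat.cast_zero
          refine Or.inl ⟨l, ?_⟩
          funext i; fin_cases i <;> simp [w] <;>
            first
              | rfl
              | linear_combination ht0
              | linear_combination -ht0
        · exfalso; omega
        · have ht' : t = ((n / 2 : ℕ) : ZMod n) := by
            rw [hveq, show v = n / 2 from by omega]
          refine Or.inr ⟨l, ?_⟩
          funext i; fin_cases i <;> simp [w] <;>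
            first
              | rfl
              | linear_combination ht'
              | linear_combination -ht' - hc2
        · exfalso; omega
      · intro hs
        rcases hs with ⟨l, rfl⟩ | ⟨l, rfl⟩
        · have hv : (fun i => l * w i) =
              (![l*4, l*2+0, l*3, l*3-0, l*(-12)] : Fin 5 → ZMod n) := by
            funext i; fin_cases i <;> simp [w]
          rw [hv]; exact mem_sol l 0 (by ring)
        · have hv : (fun i => l * w i +
              ((n / 2 : ℕ) : ZMod n) * (![0, 1, 0, 1, 0] : Fin 5 → ZMod n) i) =
              (![l*4, l*2+((n / 2 : ℕ) : ZMod n), l*3, l*3-((n / 2 : ℕ) : ZMod n),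
                l*(-12)] : Fin 5 → ZMod n) := by
            funext i; fin_cases i <;> simp [w] <;>
              first | rfl | linear_combination hc2 | linear_combination -hc2
          rw [hv]; exact mem_sol l _ (by linear_combination 2*hc2)
    · exact coset_disj 0 (n/2) (by omega) (by omega) (by omega) shape0 shape1
end
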